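/- arXiv:1904.07581 — 3 statements merged into one kernel-verified Lean document; each statement's English description precedes it below -/
import Mathlib

section
/- (Deuber's Theorem) Suppose that m,p,c,r ∈ ℕ. Then there are M,P,C ∈ ℕ such that for every (M,P,C)-set T and every r-colouring of T, some colour class contains a subset S ⊆ T which is an (m,p,c)-set. -/
/-- An `r`-colouring of a set `X ⊆ ℤ`: a collection of `r` subsets of `X`
whose union contains `X` (colour classes need not be disjoint). -/
def IsColouring (r : ℕ) (𝒞 : Fin r → Set ℤ) (X : Set ℤ) : Prop :=
  (∀ i, 𝒞 i ⊆ X) ∧ X ⊆ ⋃ i, 𝒞 i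

/-- `S` is an `(m,p,c)`-set: there is `s ∈ ℕ^{m+1}` (positive entries) with
`S = ⋃_{u} { c·s_u + Σ_{t>u} i_t·s_t : i_t ∈ {−p,…,p} }`. -/
def IsMPCSet (m p c : ℕ) (S : Set ℤ) : Prop :=
  ∃ s : Fin (m + 1) → ℤ, (∀ j, 0 < s j) ∧
    S = ⋃ u : Fin (m + 1), { z : ℤ | ∃ i : Fin (m + 1) → ℤ,
      (∀ t, |i t| ≤ (p : ℤ)) ∧
      z = (c : ℤ) * s u + ∑ t ∈ Finset.univ.filter (fun t => u < t), i t * s t }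


open Finset


/-- membership in the (N,P,CC)-set generated by `s` (ℕ-indexed). -/
def MemT (CC P N : ℕ) (s : ℕ → ℤ) (z : ℤ) : Prop :=
  ∃ u, u ≤ N ∧ ∃ x : ℕ → ℤ, (∀ t, |x t| ≤ (P : ℤ)) ∧
    z = (CC : ℤ) * s u + ∑ t ∈ Finset.Ioc u N, x t * s t

lemma sum_range_succ_Ioc (f : ℕ → ℤ) (N : ℕ) :
    ∑ v ∈ Finset.range (N + 1), f v = f 0 + ∑ v ∈ Finset.Ioc 0 N, f v := by
  have h : Finset.range (N + 1) = insert 0 (Finset.Ioc 0 N) := by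
    ext v
    simp only [Finset.mem_range, Finset.mem_insert, Finset.mem_Ioc]
    omega
  rw [h, Finset.sum_insert (by simp)]

lemma enc_mem (j t d n : ℕ) (hj : j < n) (ht : t < d) :
    t + j * d + 1 ∈ Finset.Ioc 0 (n * d) := by
  have h1 : (j + 1) * d ≤ n * d := Nat.mul_le_mul_right d hj
  have : t + j * d + 1 ≤ (j + 1) * d := by nlinarith
  simp only [Finset.mem_Ioc]
  omega

lemma dec_j (j t d : ℕ) (hd : 0 < d) (ht : t < d) : (t + j * d + 1 - 1) / d = j := by
  simp [Nat.add_sub_cancel, Nat.add_mul_div_right _ _ hd, Nat.div_eq_of_lt ht]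

lemma dec_t (j t d : ℕ) (ht : t < d) : (t + j * d + 1 - 1) % d = t := by
  simp [Nat.add_sub_cancel, Nat.add_mul_mod_self_right, Nat.mod_eq_of_lt ht]

lemma sum_Ioc_blocks (d n : ℕ) (hd : 0 < d) (f : ℕ → ℤ) :
    ∑ v ∈ Finset.Ioc 0 (n * d), f v
      = ∑ j ∈ Finset.range n, ∑ t ∈ Finset.range d, f (t + j * d + 1) := by
  rw [← Finset.sum_product']
  refine Finset.sum_nbij' (fun v => ((v - 1) / d, (v - 1) % d))
    (fun p => p.2 + p.1 * d + 1) ?_ ?_ ?_ ?_ ?_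
  · intro v hv
    simp only [Finset.mem_Ioc] at hv
    simp only [Finset.mem_product, Finset.mem_range]
    exact ⟨(Nat.div_lt_iff_lt_mul hd).mpr (by omega), Nat.mod_lt _ hd⟩
  · intro p hp
    simp only [Finset.mem_product, Finset.mem_range] at hp
    exact enc_mem p.1 p.2 d n hp.1 hp.2
  · intro v hv
    simp only [Finset.mem_Ioc] at hv
    dsimp only
    have := Nat.mod_add_div' (v - 1) d
    omega
  · intro p hp
    simp only [Finset.mem_product, Finset.mem_range] at hp
    ext
    · exact dec_j p.1 p.2 d hd hp.2
    · exact dec_t p.1 p.2 d hp.2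
  · intro v hv
    simp only [Finset.mem_Ioc] at hv
    dsimp only
    congr 1
    have := Nat.mod_add_div' (v - 1) d
    omega

lemma sum_head_tail (d u N' : ℕ) (hu : u ≤ N') (hd : d = N' + 1) (a : ℤ) (x g : ℕ → ℤ) :
    ∑ t ∈ Finset.range d, (if t = u then a else if u < t then x t else 0) * g t
      = a * g u + ∑ t ∈ Finset.Ioc u N', x t * g t := by
  have h2 : ∀ t ∈ Finset.range d, (if t = u then a else if u < t then x t else 0) * g t
      = (if t = u then a * g t else 0) + (if u < t then x t * g t else 0) := by
    intro t _
    by_cases h : t = u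
    · subst h; simp
    · by_cases h' : u < t <;> simp [h, h']
  rw [Finset.sum_congr rfl h2, Finset.sum_add_distrib]
  congr 1
  · rw [Finset.sum_ite_eq' (Finset.range d) u (fun t => a * g t),
      if_pos (Finset.mem_range.mpr (by omega))]
  · have hsub : Finset.Ioc u N' ⊆ Finset.range d := by
      intro t ht
      simp only [Finset.mem_Ioc] at ht
      exact Finset.mem_range.mpr (by omega)
    have hext : ∑ t ∈ Finset.Ioc u N', (if u < t then x t * g t else 0)
        = ∑ t ∈ Finset.range d, (if u < t then x t * g t else 0) := by
      refine Finset.sum_subset hsub ?_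
      intro t ht hnt
      rw [if_neg]
      intro hlt
      exact hnt (Finset.mem_Ioc.mpr ⟨hlt, by simp only [Finset.mem_range] at ht; omega⟩)
    rw [← hext]
    exact Finset.sum_congr rfl (fun t ht => if_pos (Finset.mem_Ioc.mp ht).1)

/-- Membership of a block-evaluation in the big `(n*d, P, CC)`-set. -/
lemma memT_eval (CC P N n d : ℕ) (hN : N = n * d) (hd : 0 < d) (s : ℕ → ℤ)
    (W : ℕ → ℕ → ℤ) (hW : ∀ j t, j < n → t < d → |W j t| ≤ (P : ℤ)) :
    MemT CC P N s ((CC : ℤ) * s 0 +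
      ∑ j ∈ Finset.range n, ∑ t ∈ Finset.range d, W j t * s (t + j * d + 1)) := by
  refine ⟨0, by omega, fun v => if 1 ≤ v ∧ v ≤ N then W ((v - 1) / d) ((v - 1) % d) else 0,
    ?_, ?_⟩
  · intro v
    dsimp only
    by_cases h : 1 ≤ v ∧ v ≤ N
    · rw [if_pos h]
      have h1 : (v - 1) / d < n := by
        refine (Nat.div_lt_iff_lt_mul hd).mpr ?_
        omega
      exact hW _ _ h1 (Nat.mod_lt _ hd)
    · rw [if_neg h]
      simp
  · congr 1
    subst hN
    rw [sum_Ioc_blocks d n hd]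
    refine Finset.sum_congr rfl fun j hj => Finset.sum_congr rfl fun t ht => ?_
    simp only [Finset.mem_range] at hj ht
    have hm := enc_mem j t d n hj ht
    simp only [Finset.mem_Ioc] at hm
    dsimp only
    rw [if_pos (show 1 ≤ t + j * d + 1 ∧ t + j * d + 1 ≤ n * d by omega),
      dec_j j t d hd ht, dec_t j t d ht]

/-- Embedding of the small `(N',P',CC)`-set on block-sum generators into the big one. -/
lemma embed_blocks (CC P' N' n d P : ℕ) (hd : d = N' + 1) (s : ℕ → ℤ)
    (SIN : Finset ℕ) (hSINsub : SIN ⊆ Finset.range n) (hne : SIN.Nonempty)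
    (hCP : (CC : ℤ) ≤ (P : ℤ)) (hP' : (P' : ℤ) ≤ (P : ℤ))
    (sh : ℕ → ℤ) (hsh : ∀ t, t ≤ N' → sh t = ∑ j ∈ SIN, s (t + j * d + 1)) :
    ∀ z, MemT CC P' N' sh z → MemT CC P (n * d) s z := by
  intro z hz
  obtain ⟨u, hu, x, hx, hzeq⟩ := hz
  set j₀ := SIN.min' hne with hj₀def
  have hj₀ : j₀ ∈ SIN := SIN.min'_mem hne
  have hj₀min : ∀ j ∈ SIN, j₀ ≤ j := fun j hj => SIN.min'_le j hj
  have hj₀n : j₀ < n := Finset.mem_range.mp (hSINsub hj₀)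
  have hud : u < d := by omega
  have hdpos : 0 < d := by omega
  have hv₀mem := enc_mem j₀ u d n hj₀n hud
  simp only [Finset.mem_Ioc] at hv₀mem
  set y : ℕ → ℤ := fun v => if 1 ≤ v ∧ v ≤ n * d then
      (if (v - 1) / d ∈ SIN then
         (if (v - 1) % d = u then (if (v - 1) / d = j₀ then 0 else (CC : ℤ))
          else if u < (v - 1) % d then x ((v - 1) % d) else 0)
       else 0) else 0 with hydef
  refine ⟨u + j₀ * d + 1, by omega, y, ?_, ?_⟩
  · intro v
    rw [hydef]
    dsimp only
    by_cases h1 : 1 ≤ v ∧ v ≤ n * d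
    · rw [if_pos h1]
      by_cases h2 : (v - 1) / d ∈ SIN
      · rw [if_pos h2]
        by_cases h3 : (v - 1) % d = u
        · rw [if_pos h3]
          by_cases h4 : (v - 1) / d = j₀
          · rw [if_pos h4]; simp
          · rw [if_neg h4]
            rw [abs_of_nonneg (by positivity)]
            exact hCP
        · rw [if_neg h3]
          by_cases h5 : u < (v - 1) % d
          · rw [if_pos h5]; exact le_trans (hx _) hP'
          · rw [if_neg h5]; simp
      · rw [if_neg h2]; simp
    · rw [if_neg h1]; simp
  · -- the sum identity
    have key : ∑ v ∈ Finset.Ioc (u + j₀ * d + 1) (n * d), y v * s v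
        = ∑ v ∈ Finset.Ioc 0 (n * d), y v * s v := by
      refine Finset.sum_subset (fun v hv => ?_) (fun v hv hvn => ?_)
      · simp only [Finset.mem_Ioc] at hv ⊢; omega
      · simp only [Finset.mem_Ioc] at hv hvn
        have hvle : v ≤ u + j₀ * d + 1 := by omega
        have hv1 : 1 ≤ v := hv.1
        have htd : (v - 1) % d < d := Nat.mod_lt _ hdpos
        have hvenc : v = (v - 1) % d + ((v - 1) / d) * d + 1 := by
          have := Nat.mod_add_div' (v - 1) d
          omega
        rw [hydef]
        dsimp only
        rw [if_pos ⟨hv1, hv.2⟩]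
        by_cases h2 : (v - 1) / d ∈ SIN
        · rw [if_pos h2]
          have hj₀j : j₀ ≤ (v - 1) / d := hj₀min _ h2
          rcases Nat.lt_or_ge j₀ ((v - 1) / d) with hlt | hge
          · exfalso
            have hmul : (j₀ + 1) * d ≤ ((v - 1) / d) * d := Nat.mul_le_mul_right d hlt
            rw [add_mul, one_mul] at hmul
            generalize hA : (v - 1) % d = A at hvenc
            generalize hB : (v - 1) / d * d = B at hvenc hmul
            generalize hC : j₀ * d = C at hmul hvle
            omega
          · have hjj₀ : (v - 1) / d = j₀ := by omega
            have htu : (v - 1) % d ≤ u := by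
              rw [hjj₀] at hvenc
              generalize hC : j₀ * d = C at hvenc hvle
              omega
            by_cases h3 : (v - 1) % d = u
            · rw [if_pos h3, if_pos hjj₀, zero_mul]
            · rw [if_neg h3, if_neg (by omega), zero_mul]
        · rw [if_neg h2, zero_mul]
    have hblocks : ∑ v ∈ Finset.Ioc 0 (n * d), y v * s v
        = ∑ j ∈ Finset.range n, ∑ t ∈ Finset.range d,
            (if j ∈ SIN then
              (if t = u then (if j = j₀ then 0 else (CC : ℤ))
               else if u < t then x t else 0) * s (t + j * d + 1) else 0) := by
      rw [sum_Ioc_blocks d n hdpos]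
      refine Finset.sum_congr rfl fun j hj => Finset.sum_congr rfl fun t ht => ?_
      simp only [Finset.mem_range] at hj ht
      have hm := enc_mem j t d n hj ht
      simp only [Finset.mem_Ioc] at hm
      rw [hydef]
      dsimp only
      rw [if_pos ⟨by omega, by omega⟩, dec_j j t d hdpos ht, dec_t j t d ht]
      by_cases h2 : j ∈ SIN
      · rw [if_pos h2, if_pos h2]
      · rw [if_neg h2, if_neg h2, zero_mul]
    have hcollapse : ∑ j ∈ Finset.range n, ∑ t ∈ Finset.range d,
            (if j ∈ SIN then
              (if t = u then (if j = j₀ then 0 else (CC : ℤ))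
               else if u < t then x t else 0) * s (t + j * d + 1) else 0)
        = ∑ j ∈ SIN, ((if j = j₀ then 0 else (CC : ℤ)) * s (u + j * d + 1)
            + ∑ t ∈ Finset.Ioc u N', x t * s (t + j * d + 1)) := by
      have h1 : ∀ j, ∑ t ∈ Finset.range d,
          (if j ∈ SIN then
              (if t = u then (if j = j₀ then 0 else (CC : ℤ))
               else if u < t then x t else 0) * s (t + j * d + 1) else 0)
          = if j ∈ SIN then ((if j = j₀ then 0 else (CC : ℤ)) * s (u + j * d + 1)
              + ∑ t ∈ Finset.Ioc u N', x t * s (t + j * d + 1)) else 0 := by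
        intro j
        by_cases h2 : j ∈ SIN
        · simp only [if_pos h2]
          exact sum_head_tail d u N' hu hd _ x (fun t => s (t + j * d + 1))
        · simp only [if_neg h2, Finset.sum_const_zero]
      rw [Finset.sum_congr rfl fun j _ => h1 j, Finset.sum_ite_mem,
        Finset.inter_eq_right.mpr hSINsub]
    rw [key, hblocks, hcollapse, Finset.sum_add_distrib]
    have hhead : (CC : ℤ) * s (u + j₀ * d + 1)
        + ∑ j ∈ SIN, (if j = j₀ then 0 else (CC : ℤ)) * s (u + j * d + 1)
        = ∑ j ∈ SIN, (CC : ℤ) * s (u + j * d + 1) := by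
      rw [← Finset.sum_erase_add SIN _ hj₀, ← Finset.sum_erase_add SIN
        (fun j => (CC : ℤ) * s (u + j * d + 1)) hj₀]
      rw [if_pos rfl, zero_mul, add_zero]
      rw [Finset.sum_congr rfl (fun j hj => by
        rw [if_neg (Finset.ne_of_mem_erase hj)])]
      ring
    have hLHS : z = ∑ j ∈ SIN, (CC : ℤ) * s (u + j * d + 1)
        + ∑ j ∈ SIN, ∑ t ∈ Finset.Ioc u N', x t * s (t + j * d + 1) := by
      rw [hzeq, hsh u hu, Finset.mul_sum]
      congr 1
      rw [Finset.sum_comm]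
      refine Finset.sum_congr rfl fun t ht => ?_
      simp only [Finset.mem_Ioc] at ht
      rw [hsh t (by omega), Finset.mul_sum]
    rw [hLHS, ← hhead]
    ring

lemma sum_Ioc_shift (a b : ℕ) (f : ℕ → ℤ) :
    ∑ t ∈ Finset.Ioc (a + 1) (b + 1), f t = ∑ t ∈ Finset.Ioc a b, f (t + 1) := by
  refine Finset.sum_nbij' (fun t => t - 1) (fun t => t + 1) ?_ ?_ ?_ ?_ ?_ <;>
    intro t ht <;> simp only [Finset.mem_Ioc] at * <;> try omega
  congr 1
  omega

set_option maxHeartbeats 1000000 in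
theorem RV (p c r : ℕ) (hp : 0 < p) (hc : 0 < c) (K : ℕ) :
    ∀ k, ∀ γ : ℕ, k + γ ≤ K + 1 →
    ∃ N P B : ℕ, 0 < P ∧
      ∀ s : ℕ → ℤ, (∀ t, 0 < s t) → ∀ χ : ℤ → Fin r,
      ∃ (σ : ℕ → ℤ) (w : ℕ → ℕ → ℤ) (κ : ℕ → Fin r),
        (∀ l t, ((c : ℤ)) ^ γ ∣ w l t) ∧
        (∀ l t, |w l t| ≤ (B : ℤ)) ∧
        (∀ l, l ≤ k → σ l = ∑ t ∈ Finset.range (N + 1), w l t * s t) ∧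
        (∀ l, l ≤ k → ∀ i : ℕ → ℤ, (∀ t, |i t| ≤ (p : ℤ)) →
          MemT (c ^ (K + 2)) P N s ((c : ℤ) * σ l + ∑ t ∈ Finset.Ioc l k, i t * σ t) ∧
          χ ((c : ℤ) * σ l + ∑ t ∈ Finset.Ioc l k, i t * σ t) = κ l) := by
  intro k
  induction k with
  | zero =>
    intro γ hγ
    refine ⟨0, 1, c ^ (K + 1), one_pos, fun s hs χ => ?_⟩
    refine ⟨fun _ => (c : ℤ) ^ (K + 1) * s 0,
      fun _ t => if t = 0 then (c : ℤ) ^ (K + 1) else 0,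
      fun _ => χ ((c : ℤ) * ((c : ℤ) ^ (K + 1) * s 0)), ?_, ?_, ?_, ?_⟩
    · intro l t
      dsimp only
      by_cases h : t = 0
      · rw [if_pos h]
        exact pow_dvd_pow _ (by omega)
      · rw [if_neg h]
        exact dvd_zero _
    · intro l t
      dsimp only
      by_cases h : t = 0
      · rw [if_pos h, abs_of_nonneg (by positivity)]
        push_cast
        exact le_refl _
      · rw [if_neg h]
        simp
    · intro l _
      dsimp only
      rw [Finset.sum_range_one, if_pos rfl]
    · intro l hl i hi
      have hl0 : l = 0 := by omega
      subst hl0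
      dsimp only
      rw [Finset.Ioc_self, Finset.sum_empty, add_zero]
      refine ⟨⟨0, le_refl 0, fun _ => 0, fun t => by simp, ?_⟩, rfl⟩
      rw [Finset.Ioc_self, Finset.sum_empty]
      push_cast
      ring
  | succ k ih =>
    intro γ hγ
    obtain ⟨N', P', B', hP', IH⟩ := ih (γ + 1) (by omega)
    -- the alphabet
    set d := N' + 1 with hd
    set X := (k + 1) * p * B' with hX
    let A := {v : Fin d → ℤ // ∀ t, |v t| ≤ (X : ℤ) ∧ ((c : ℤ)) ^ (γ + 1) ∣ v t}
    have hAfin : Finite A := by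
      have hmem : ∀ (v : A) (t : Fin d), v.1 t ∈ Finset.Icc (-(X : ℤ)) (X : ℤ) := by
        intro v t
        rcases v.2 t with ⟨h1, -⟩
        rw [Finset.mem_Icc]
        exact ⟨neg_le_of_abs_le h1, le_of_abs_le h1⟩
      refine Finite.of_injective
        (fun v : A => (fun t => (⟨v.1 t, hmem v t⟩ : (Finset.Icc (-(X : ℤ)) (X : ℤ))))) ?_
      intro a b hab
      apply Subtype.ext
      funext t
      exact congrArg Subtype.val (congrFun hab t)
    obtain ⟨ι, ιfin, hHJ⟩ := Combinatorics.Line.exists_mono_in_high_dimension A (Fin r)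
    set n := @Fintype.card ι ιfin with hn
    have hHJn : ∀ Col : (Fin n → A) → Fin r,
        ∃ l : Combinatorics.Line A (Fin n), l.IsMono Col := by
      intro Col
      obtain ⟨l, hl⟩ := hHJ fun f => Col fun j => f ((@Fintype.equivFin ι ιfin).symm j)
      obtain ⟨c₀, hc₀⟩ := hl
      refine ⟨⟨fun j => l.idxFun ((@Fintype.equivFin ι ιfin).symm j), ?_⟩, c₀, ?_⟩
      · obtain ⟨i, hi⟩ := l.proper
        exact ⟨(@Fintype.equivFin ι ιfin) i, by rw [Equiv.symm_apply_apply]; exact hi⟩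
      · intro x
        exact hc₀ x
    refine ⟨n * d, c ^ (K + 2) + P' + X, c ^ (K + 1) + X + B', by positivity, ?_⟩
    intro s hs χ
    have hcz : (c : ℤ) ≠ 0 := by
      have : (0 : ℤ) < (c : ℤ) := by exact_mod_cast hc
      exact ne_of_gt this
    have hdiv : ∀ a : ℤ, ((c : ℤ)) ^ (γ + 1) ∣ a →
        ((c : ℤ)) * (a / (c : ℤ)) = a ∧ ((c : ℤ)) ^ γ ∣ a / (c : ℤ) ∧ |a / (c : ℤ)| ≤ |a| := by
      intro a ha
      obtain ⟨b, hb⟩ := ha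
      have hb' : a = (c : ℤ) * ((c : ℤ) ^ γ * b) := by rw [hb]; ring
      rw [hb', Int.mul_ediv_cancel_left _ hcz]
      refine ⟨rfl, Dvd.intro b rfl, ?_⟩
      have h1 : (1 : ℤ) ≤ |(c : ℤ)| := by
        rw [abs_of_nonneg (by positivity)]
        exact_mod_cast hc
      calc |(c : ℤ) ^ γ * b| ≤ |(c : ℤ)| * |(c : ℤ) ^ γ * b| :=
            le_mul_of_one_le_left (abs_nonneg _) h1
        _ = |(c : ℤ) * ((c : ℤ) ^ γ * b)| := (abs_mul _ _).symm
    -- evaluation of words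
    set wval : (Fin n → A) → ℕ → ℕ → ℤ := fun f j t =>
      if h : j < n ∧ t < d then (f ⟨j, h.1⟩).1 ⟨t, h.2⟩ else 0 with hwval
    have hwvalbd : ∀ f j t, |wval f j t| ≤ (X : ℤ) := by
      intro f j t
      rw [hwval]
      dsimp only
      by_cases h : j < n ∧ t < d
      · rw [dif_pos h]
        exact ((f ⟨j, h.1⟩).2 ⟨t, h.2⟩).1
      · rw [dif_neg h]
        simp
    set E : (Fin n → A) → ℤ := fun f =>
      (↑(c ^ (K + 2)) : ℤ) * s 0 +
        ∑ j ∈ Finset.range n, ∑ t ∈ Finset.range d, wval f j t * s (t + j * d + 1) with hE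
    obtain ⟨ℓ, hmono⟩ := hHJn fun f => χ (E f)
    obtain ⟨κ₀, hκ₀⟩ := hmono
    set SIN : Finset ℕ :=
      (Finset.univ.filter fun j : Fin n => ℓ.idxFun j = none).image Fin.val with hSINdef
    have hSIN : ∀ v (h : v < n), (v ∈ SIN ↔ ℓ.idxFun ⟨v, h⟩ = none) := by
      intro v h
      rw [hSINdef]
      simp only [Finset.mem_image, Finset.mem_filter, Finset.mem_univ, true_and]
      constructor
      · rintro ⟨j, hj, rfl⟩
        have hje : (⟨(j : ℕ), h⟩ : Fin n) = j := Fin.ext rfl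
        rwa [hje]
      · intro hnone
        exact ⟨⟨v, h⟩, hnone, rfl⟩
    have hSINsub : SIN ⊆ Finset.range n := by
      intro v hv
      rw [hSINdef] at hv
      simp only [Finset.mem_image] at hv
      obtain ⟨j, -, rfl⟩ := hv
      exact Finset.mem_range.mpr j.2
    have hSINne : SIN.Nonempty := by
      obtain ⟨i, hi⟩ := ℓ.proper
      exact ⟨i.val, (hSIN i.val i.2).mpr (by rwa [Fin.eta])⟩
    -- fixed letters
    set gx : ℕ → ℕ → ℤ := fun j t =>
      if h : j < n ∧ t < d then ((ℓ.idxFun ⟨j, h.1⟩).elim 0 fun a => a.1 ⟨t, h.2⟩) else 0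
      with hgxdef
    have hgx0 : ∀ j t, j ∈ SIN → gx j t = 0 := by
      intro j t hj
      rw [hgxdef]
      dsimp only
      by_cases h : j < n ∧ t < d
      · rw [dif_pos h, (hSIN j h.1).mp hj]
        rfl
      · rw [dif_neg h]
    have hgxA : ∀ j t, |gx j t| ≤ (X : ℤ) ∧ ((c : ℤ)) ^ (γ + 1) ∣ gx j t := by
      intro j t
      rw [hgxdef]
      dsimp only
      by_cases h : j < n ∧ t < d
      · rw [dif_pos h]
        cases hcase : ℓ.idxFun ⟨j, h.1⟩ with
        | none => simp
        | some a =>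
          simp only [Option.elim_some]
          exact ⟨(a.2 ⟨t, h.2⟩).1, (a.2 ⟨t, h.2⟩).2⟩
      · rw [dif_neg h]
        exact ⟨by simp, dvd_zero _⟩
    -- block-sum generators
    set sh : ℕ → ℤ := fun t => if t ≤ N' then ∑ j ∈ SIN, s (t + j * d + 1) else 1 with hshdef
    have hshval : ∀ t, t ≤ N' → sh t = ∑ j ∈ SIN, s (t + j * d + 1) := by
      intro t ht
      rw [hshdef]
      dsimp only
      rw [if_pos ht]
    have hshpos : ∀ t, 0 < sh t := by
      intro t
      rw [hshdef]
      dsimp only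
      by_cases h : t ≤ N'
      · rw [if_pos h]
        exact Finset.sum_pos (fun j _ => hs _) hSINne
      · rw [if_neg h]
        exact one_pos
    obtain ⟨σ', w', κ', Hdiv', Hbd', Hrepr', Hrow'⟩ := IH sh hshpos χ
    -- new data
    set σ0 : ℤ := (c : ℤ) ^ (K + 1) * s 0 +
        ∑ j ∈ Finset.range n, ∑ t ∈ Finset.range d, (gx j t / (c : ℤ)) * s (t + j * d + 1)
      with hσ0
    have hXP : (X : ℤ) ≤ ((c ^ (K + 2) + P' + X : ℕ) : ℤ) := by
      push_cast
      have h1 : (0 : ℤ) ≤ (c : ℤ) ^ (K + 2) := by positivity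
      have h2 : (0 : ℤ) ≤ (P' : ℤ) := by positivity
      linarith
    have hCP : ((c ^ (K + 2) : ℕ) : ℤ) ≤ ((c ^ (K + 2) + P' + X : ℕ) : ℤ) := by
      push_cast
      have h2 : (0 : ℤ) ≤ (P' : ℤ) := by positivity
      have h3 : (0 : ℤ) ≤ (X : ℤ) := by positivity
      linarith
    have hP'P : ((P' : ℕ) : ℤ) ≤ ((c ^ (K + 2) + P' + X : ℕ) : ℤ) := by
      push_cast
      have h1 : (0 : ℤ) ≤ (c : ℤ) ^ (K + 2) := by positivity
      have h3 : (0 : ℤ) ≤ (X : ℤ) := by positivity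
      linarith
    have hwval_eval : ∀ (f : Fin n → A) (jn : Fin n) (tf : Fin d),
        wval f jn.val tf.val = (f jn).1 tf := by
      intro f jn tf
      rw [hwval]
      dsimp only
      rw [dif_pos ⟨jn.2, tf.2⟩]
    have hgx_eval : ∀ (jn : Fin n) (tf : Fin d),
        gx jn.val tf.val = (ℓ.idxFun jn).elim 0 fun a => a.1 tf := by
      intro jn tf
      rw [hgxdef]
      dsimp only
      rw [dif_pos ⟨jn.2, tf.2⟩]
    have hEmem : ∀ f, MemT (c ^ (K + 2)) (c ^ (K + 2) + P' + X) (n * d) s (E f) := by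
      intro f
      rw [hE]
      exact memT_eval (c ^ (K + 2)) (c ^ (K + 2) + P' + X) (n * d) n d rfl (by omega) s
        (wval f) (fun j t _ _ => le_trans (hwvalbd f j t) hXP)
    have hpull : ∀ (Q : Prop) [Decidable Q] (F : ℕ → ℤ) (S : Finset ℕ),
        (∑ t ∈ S, if Q then F t else 0) = if Q then ∑ t ∈ S, F t else 0 := by
      intro Q _ F S
      split_ifs
      · rfl
      · exact Finset.sum_const_zero
    refine ⟨fun l => if l = 0 then σ0 else σ' (l - 1),
      fun l v => if v = 0 then (if l = 0 then (c : ℤ) ^ (K + 1) else 0)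
        else if 1 ≤ v ∧ v ≤ n * d then
          (if l = 0 then gx ((v - 1) / d) ((v - 1) % d) / (c : ℤ)
           else if (v - 1) / d ∈ SIN then w' (l - 1) ((v - 1) % d) else 0)
        else 0,
      fun l => if l = 0 then κ₀ else κ' (l - 1), ?_, ?_, ?_, ?_⟩
    · -- divisibility
      intro l v
      dsimp only
      by_cases hv0 : v = 0
      · rw [if_pos hv0]
        by_cases hl0 : l = 0
        · rw [if_pos hl0]
          exact pow_dvd_pow _ (by omega)
        · rw [if_neg hl0]
          exact dvd_zero _
      · rw [if_neg hv0]
        by_cases hv1 : 1 ≤ v ∧ v ≤ n * d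
        · rw [if_pos hv1]
          by_cases hl0 : l = 0
          · rw [if_pos hl0]
            exact (hdiv _ (hgxA _ _).2).2.1
          · rw [if_neg hl0]
            by_cases hsin : (v - 1) / d ∈ SIN
            · rw [if_pos hsin]
              exact dvd_trans (pow_dvd_pow _ (Nat.le_succ γ)) (Hdiv' _ _)
            · rw [if_neg hsin]
              exact dvd_zero _
        · rw [if_neg hv1]
          exact dvd_zero _
    · -- bounds
      intro l v
      dsimp only
      have hBcast : ((c ^ (K + 1) + X + B' : ℕ) : ℤ)
          = (c : ℤ) ^ (K + 1) + (X : ℤ) + (B' : ℤ) := by push_cast; ring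
      rw [hBcast]
      have hc1 : (0 : ℤ) ≤ (c : ℤ) ^ (K + 1) := by positivity
      have hX1 : (0 : ℤ) ≤ (X : ℤ) := by positivity
      have hB1 : (0 : ℤ) ≤ (B' : ℤ) := by positivity
      by_cases hv0 : v = 0
      · rw [if_pos hv0]
        by_cases hl0 : l = 0
        · rw [if_pos hl0, abs_of_nonneg hc1]
          linarith
        · rw [if_neg hl0]
          simp only [abs_zero]
          linarith
      · rw [if_neg hv0]
        by_cases hv1 : 1 ≤ v ∧ v ≤ n * d
        · rw [if_pos hv1]
          by_cases hl0 : l = 0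
          · rw [if_pos hl0]
            have := le_trans (hdiv _ (hgxA ((v-1)/d) ((v-1)%d)).2).2.2
              (hgxA ((v-1)/d) ((v-1)%d)).1
            linarith
          · rw [if_neg hl0]
            by_cases hsin : (v - 1) / d ∈ SIN
            · rw [if_pos hsin]
              have := Hbd' (l - 1) ((v - 1) % d)
              linarith
            · rw [if_neg hsin]
              simp only [abs_zero]
              linarith
        · rw [if_neg hv1]
          simp only [abs_zero]
          linarith
    · -- representation
      intro l hl
      dsimp only
      by_cases hl0 : l = 0
      · subst hl0
        have hdpos : 0 < d := by omega
        rw [if_pos rfl]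
        conv_rhs => rw [sum_range_succ_Ioc, sum_Ioc_blocks d n hdpos]
        have hhead : (if (0 : ℕ) = 0 then (if (0 : ℕ) = 0 then (c : ℤ) ^ (K + 1) else 0)
            else if 1 ≤ (0:ℕ) ∧ (0:ℕ) ≤ n * d then
              (if (0:ℕ) = 0 then gx (((0:ℕ) - 1) / d) (((0:ℕ) - 1) % d) / (c : ℤ)
               else if ((0:ℕ) - 1) / d ∈ SIN then w' ((0:ℕ) - 1) (((0:ℕ) - 1) % d) else 0)
            else 0) = (c : ℤ) ^ (K + 1) := by norm_num
        rw [hhead, hσ0]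
        congr 1
        refine Finset.sum_congr rfl fun j hj => Finset.sum_congr rfl fun t ht => ?_
        simp only [Finset.mem_range] at hj ht
        have hm := enc_mem j t d n hj ht
        simp only [Finset.mem_Ioc] at hm
        rw [if_neg (by omega), if_pos (show 1 ≤ t + j * d + 1 ∧ t + j * d + 1 ≤ n * d by omega),
          if_pos rfl, dec_j j t d (by omega) ht, dec_t j t d ht]
      · obtain ⟨l', rfl⟩ : ∃ l', l = l' + 1 := ⟨l - 1, by omega⟩
        have hdpos : 0 < d := by omega
        rw [if_neg (Nat.succ_ne_zero l')]
        simp only [Nat.add_sub_cancel]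
        conv_rhs => rw [sum_range_succ_Ioc, sum_Ioc_blocks d n hdpos]
        rw [Hrepr' l' (by omega)]
        have hhead : (if (0 : ℕ) = 0 then (if l' + 1 = 0 then (c : ℤ) ^ (K + 1) else 0)
            else if 1 ≤ (0:ℕ) ∧ (0:ℕ) ≤ n * d then
              (if l' + 1 = 0 then gx (((0:ℕ) - 1) / d) (((0:ℕ) - 1) % d) / (c : ℤ)
               else if ((0:ℕ) - 1) / d ∈ SIN then w' l' (((0:ℕ) - 1) % d) else 0)
            else 0) = 0 := by norm_num
        rw [hhead, zero_mul, zero_add]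
        have hstep : ∀ j ∈ Finset.range n, ∀ t ∈ Finset.range d,
            (if t + j * d + 1 = 0 then (if l' + 1 = 0 then (c : ℤ) ^ (K + 1) else 0)
              else if 1 ≤ t + j * d + 1 ∧ t + j * d + 1 ≤ n * d then
                (if l' + 1 = 0 then gx ((t + j * d + 1 - 1) / d) ((t + j * d + 1 - 1) % d) / (c : ℤ)
                 else if (t + j * d + 1 - 1) / d ∈ SIN then w' l' ((t + j * d + 1 - 1) % d)
                   else 0)
              else 0) * s (t + j * d + 1)
            = if j ∈ SIN then w' l' t * s (t + j * d + 1) else 0 := by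
          intro j hj t ht
          simp only [Finset.mem_range] at hj ht
          have hm := enc_mem j t d n hj ht
          simp only [Finset.mem_Ioc] at hm
          rw [if_neg (by omega), if_pos (show 1 ≤ t + j * d + 1 ∧ t + j * d + 1 ≤ n * d by omega),
            if_neg (Nat.succ_ne_zero l'), dec_j j t d (by omega) ht, dec_t j t d ht]
          by_cases hsin : j ∈ SIN
          · rw [if_pos hsin, if_pos hsin]
          · rw [if_neg hsin, if_neg hsin, zero_mul]
        rw [Finset.sum_congr rfl fun j hj => Finset.sum_congr rfl fun t ht => hstep j hj t ht]
        rw [Finset.sum_congr rfl fun j (hj : j ∈ Finset.range n) =>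
          hpull (j ∈ SIN) (fun t => w' l' t * s (t + j * d + 1)) (Finset.range d)]
        rw [Finset.sum_ite_mem, Finset.inter_eq_right.mpr hSINsub]
        rw [Finset.sum_comm]
        refine Finset.sum_congr rfl fun t ht => ?_
        simp only [Finset.mem_range] at ht
        rw [hshval t (by omega), Finset.mul_sum]
    · -- rows
      intro l hl i hi
      dsimp only
      by_cases hl0 : l = 0
      · subst hl0
        -- the letter corresponding to i
        set VN : ℕ → ℤ := fun t => ∑ lv ∈ Finset.Ioc 0 (k + 1), i lv * w' (lv - 1) t with hVN
        have hVbd : ∀ t, |VN t| ≤ (X : ℤ) := by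
          intro t
          rw [hVN]
          dsimp only
          calc |∑ lv ∈ Finset.Ioc 0 (k + 1), i lv * w' (lv - 1) t|
              ≤ ∑ lv ∈ Finset.Ioc 0 (k + 1), |i lv * w' (lv - 1) t| :=
                Finset.abs_sum_le_sum_abs _ _
            _ ≤ ∑ _lv ∈ Finset.Ioc 0 (k + 1), (p : ℤ) * (B' : ℤ) := by
                refine Finset.sum_le_sum fun lv _ => ?_
                rw [abs_mul]
                exact mul_le_mul (hi lv) (Hbd' _ _) (abs_nonneg _) (by positivity)
            _ = (X : ℤ) := by
                rw [Finset.sum_const, Nat.card_Ioc, hX]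
                push_cast
                ring
        have hVdvd : ∀ t, ((c : ℤ)) ^ (γ + 1) ∣ VN t := by
          intro t
          rw [hVN]
          exact Finset.dvd_sum fun lv _ => Dvd.dvd.mul_left (Hdiv' _ _) _
        set vA : A := ⟨fun tf => VN tf.val, fun tf => ⟨hVbd _, hVdvd _⟩⟩ with hvA
        have hwv : ∀ j ∈ Finset.range n, ∀ t ∈ Finset.range d,
            wval (ℓ vA) j t * s (t + j * d + 1)
              = (gx j t + if j ∈ SIN then VN t else 0) * s (t + j * d + 1) := by
          intro j hj t ht
          simp only [Finset.mem_range] at hj ht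
          congr 1
          refine (hwval_eval (ℓ vA) ⟨j, hj⟩ ⟨t, ht⟩).trans ?_
          rw [Combinatorics.Line.coe_apply]
          by_cases hsin : j ∈ SIN
          · rw [if_pos hsin, (hSIN j hj).mp hsin, hgx0 j t hsin, zero_add]
            rfl
          · rw [if_neg hsin, add_zero]
            cases hcase : ℓ.idxFun ⟨j, hj⟩ with
            | none => exact absurd ((hSIN j hj).mpr hcase) hsin
            | some a =>
              rw [show gx j t = (ℓ.idxFun ⟨j, hj⟩).elim 0 (fun a => a.1 ⟨t, ht⟩) from
                hgx_eval ⟨j, hj⟩ ⟨t, ht⟩, hcase]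
              rfl
        have hEeq : E (ℓ vA) = (↑(c ^ (K + 2)) : ℤ) * s 0
            + ∑ j ∈ Finset.range n, ∑ t ∈ Finset.range d, gx j t * s (t + j * d + 1)
            + ∑ j ∈ SIN, ∑ t ∈ Finset.range d, VN t * s (t + j * d + 1) := by
          rw [hE]
          dsimp only
          rw [Finset.sum_congr rfl fun j hj => Finset.sum_congr rfl fun t ht => hwv j hj t ht]
          have hsp : ∀ j ∈ Finset.range n, ∀ t ∈ Finset.range d,
              (gx j t + if j ∈ SIN then VN t else 0) * s (t + j * d + 1)
                = gx j t * s (t + j * d + 1)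
                  + (if j ∈ SIN then VN t * s (t + j * d + 1) else 0) := by
            intro j _ t _
            by_cases hsin : j ∈ SIN
            · rw [if_pos hsin, if_pos hsin, add_mul]
            · rw [if_neg hsin, if_neg hsin, add_zero, add_zero]
          rw [Finset.sum_congr rfl fun j hj => Finset.sum_congr rfl fun t ht => hsp j hj t ht]
          rw [Finset.sum_congr rfl fun j (_ : j ∈ Finset.range n) =>
            Finset.sum_add_distrib, Finset.sum_add_distrib, add_assoc]
          congr 2
          rw [Finset.sum_congr rfl fun j (hj : j ∈ Finset.range n) =>
            hpull (j ∈ SIN) (fun t => VN t * s (t + j * d + 1)) (Finset.range d)]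
          rw [Finset.sum_ite_mem, Finset.inter_eq_right.mpr hSINsub]
        have hLHSsum : ∑ t ∈ Finset.Ioc 0 (k + 1), i t * (if t = 0 then σ0 else σ' (t - 1))
            = ∑ j ∈ SIN, ∑ t ∈ Finset.range d, VN t * s (t + j * d + 1) := by
          calc ∑ t ∈ Finset.Ioc 0 (k + 1), i t * (if t = 0 then σ0 else σ' (t - 1))
              = ∑ lv ∈ Finset.Ioc 0 (k + 1),
                  ∑ t ∈ Finset.range d, i lv * (w' (lv - 1) t * sh t) := by
                refine Finset.sum_congr rfl fun lv hlv => ?_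
                simp only [Finset.mem_Ioc] at hlv
                rw [if_neg (by omega), Hrepr' (lv - 1) (by omega), Finset.mul_sum]
            _ = ∑ t ∈ Finset.range d, VN t * sh t := by
                rw [Finset.sum_comm]
                refine Finset.sum_congr rfl fun t _ => ?_
                rw [hVN]
                dsimp only
                rw [Finset.sum_mul]
                exact Finset.sum_congr rfl fun lv _ => by ring
            _ = ∑ t ∈ Finset.range d, ∑ j ∈ SIN, VN t * s (t + j * d + 1) := by
                refine Finset.sum_congr rfl fun t ht => ?_
                simp only [Finset.mem_range] at ht
                rw [hshval t (by omega), Finset.mul_sum]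
            _ = ∑ j ∈ SIN, ∑ t ∈ Finset.range d, VN t * s (t + j * d + 1) := Finset.sum_comm
        have hcσ0 : (c : ℤ) * σ0 = (↑(c ^ (K + 2)) : ℤ) * s 0 +
            ∑ j ∈ Finset.range n, ∑ t ∈ Finset.range d, gx j t * s (t + j * d + 1) := by
          rw [hσ0, mul_add, Finset.mul_sum]
          congr 1
          · push_cast
            ring
          · refine Finset.sum_congr rfl fun j _ => ?_
            rw [Finset.mul_sum]
            refine Finset.sum_congr rfl fun t _ => ?_
            rw [← mul_assoc, (hdiv _ (hgxA j t).2).1]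
        have key : (c : ℤ) * (if (0 : ℕ) = 0 then σ0 else σ' (0 - 1))
            + ∑ t ∈ Finset.Ioc 0 (k + 1), i t * (if t = 0 then σ0 else σ' (t - 1))
            = E (ℓ vA) := by
          rw [if_pos rfl, hLHSsum, hcσ0, hEeq]
        rw [key]
        constructor
        · exact hEmem (ℓ vA)
        · rw [if_pos rfl]
          exact hκ₀ vA
      · obtain ⟨l', rfl⟩ : ∃ l', l = l' + 1 := ⟨l - 1, by omega⟩
        have hne : l' + 1 ≠ 0 := Nat.succ_ne_zero l'
        have helem : (c : ℤ) * (if l' + 1 = 0 then σ0 else σ' (l' + 1 - 1))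
            + ∑ t ∈ Finset.Ioc (l' + 1) (k + 1), i t * (if t = 0 then σ0 else σ' (t - 1))
            = (c : ℤ) * σ' l' + ∑ t ∈ Finset.Ioc l' k, i (t + 1) * σ' t := by
          rw [if_neg hne]
          simp only [Nat.add_sub_cancel]
          congr 1
          rw [sum_Ioc_shift]
          refine Finset.sum_congr rfl fun t ht => ?_
          rw [if_neg (Nat.succ_ne_zero t)]
          simp only [Nat.add_sub_cancel]
        rw [helem]
        obtain ⟨hmem', hχ'⟩ := Hrow' l' (by omega) (fun t => i (t + 1)) (fun t => hi (t + 1))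
        constructor
        · exact embed_blocks (c ^ (K + 2)) P' N' n d (c ^ (K + 2) + P' + X) hd s SIN hSINsub
            hSINne hCP hP'P sh hshval _ hmem'
        · rw [hχ', if_neg hne]
          simp only [Nat.add_sub_cancel]

set_option maxHeartbeats 1000000 in
/-- Deuber's theorem. -/
theorem stmt2 (m p c r : ℕ) (hm : 0 < m) (hp : 0 < p) (hc : 0 < c) (hr : 0 < r) :
    ∃ M P C : ℕ, 0 < M ∧ 0 < P ∧ 0 < C ∧
      ∀ T : Set ℤ, (∀ z ∈ T, 0 < z) → IsMPCSet M P C T →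
        ∀ 𝒞 : Fin r → Set ℤ, IsColouring r 𝒞 T →
          ∃ (i : Fin r) (S : Set ℤ), S ⊆ 𝒞 i ∧ IsMPCSet m p c S := by
  classical
  set K := r * (m + 1) with hK
  obtain ⟨N, P, B, hPpos, hRV⟩ := RV p c r hp hc K K 1 (by omega)
  refine ⟨N + 1, P, c ^ (K + 2), by omega, hPpos, by positivity, ?_⟩
  intro T hTpos hT 𝒞 h𝒞
  obtain ⟨s, hspos, hTeq⟩ := hT
  -- a choice colouring function
  have hχex : ∃ χ : ℤ → Fin r, ∀ z ∈ T, z ∈ 𝒞 (χ z) := by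
    refine ⟨fun z => if h : ∃ i, z ∈ 𝒞 i then h.choose else ⟨0, hr⟩, fun z hz => ?_⟩
    have hz' : ∃ i, z ∈ 𝒞 i := by
      have := h𝒞.2 hz
      simpa [Set.mem_iUnion] using this
    simp only [dif_pos hz']
    exact hz'.choose_spec
  obtain ⟨χ, hχT⟩ := hχex
  -- ℕ-indexed generators
  set sN : ℕ → ℤ := fun t => if h : t ≤ N + 1 then s ⟨t, by omega⟩ else 1 with hsN
  have hsNpos : ∀ t, 0 < sN t := by
    intro t
    rw [hsN]
    dsimp only
    by_cases h : t ≤ N + 1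
    · rw [dif_pos h]
      exact hspos _
    · rw [dif_neg h]
      exact one_pos
  -- bridge from MemT to membership in T
  have hbridge : ∀ z, MemT (c ^ (K + 2)) P N sN z → z ∈ T := by
    intro z hz
    obtain ⟨u, hu, x, hx, hzeq⟩ := hz
    rw [hTeq]
    set uf : Fin (N + 1 + 1) := ⟨u, by omega⟩ with hufdef
    have hufval : (uf : ℕ) = u := rfl
    refine Set.mem_iUnion.mpr ⟨uf, ?_⟩
    refine ⟨fun t => if u < (t : ℕ) ∧ (t : ℕ) ≤ N then x (t : ℕ) else 0, ?_, ?_⟩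
    · intro t
      dsimp only
      by_cases h : u < (t : ℕ) ∧ (t : ℕ) ≤ N
      · rw [if_pos h]
        exact hx _
      · rw [if_neg h]
        simp
    · have hss : Finset.univ.filter (fun t : Fin (N + 1 + 1) => uf < t ∧ (t : ℕ) ≤ N) ⊆
          Finset.univ.filter (fun t : Fin (N + 1 + 1) => uf < t) := by
        intro t ht
        simp only [Finset.mem_filter, Finset.mem_univ, true_and] at ht ⊢
        exact ht.1
      have hzero : ∀ t ∈ Finset.univ.filter (fun t : Fin (N + 1 + 1) => uf < t),
          t ∉ Finset.univ.filter (fun t : Fin (N + 1 + 1) => uf < t ∧ (t : ℕ) ≤ N) →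
          (if u < (t : ℕ) ∧ (t : ℕ) ≤ N then x (t : ℕ) else 0) * s t = 0 := by
        intro t ht hnt
        simp only [Finset.mem_filter, Finset.mem_univ, true_and] at ht hnt
        rw [if_neg, zero_mul]
        intro hcon
        exact hnt ⟨ht, hcon.2⟩
      have hsum : ∑ t ∈ Finset.univ.filter (fun t : Fin (N + 1 + 1) => uf < t),
          (if u < (t : ℕ) ∧ (t : ℕ) ≤ N then x (t : ℕ) else 0) * s t
          = ∑ t' ∈ Finset.Ioc u N, x t' * sN t' := by
        rw [← Finset.sum_subset hss hzero]
        refine Finset.sum_nbij' (fun t : Fin (N + 1 + 1) => (t : ℕ))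
          (fun t' => (⟨min t' (N + 1), by omega⟩ : Fin (N + 1 + 1))) ?_ ?_ ?_ ?_ ?_
        · intro t ht
          simp only [Finset.mem_filter, Finset.mem_univ, true_and, Fin.lt_def, hufval] at ht
          simp only [Finset.mem_Ioc]
          exact ⟨ht.1, ht.2⟩
        · intro t' ht'
          simp only [Finset.mem_Ioc] at ht'
          simp only [Finset.mem_filter, Finset.mem_univ, true_and, Fin.lt_def, hufval]
          constructor
          · show u < min t' (N + 1)
            omega
          · show min t' (N + 1) ≤ N
            omega
        · intro t ht
          have h2 : (t : ℕ) ≤ N + 1 := by omega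
          apply Fin.ext
          show min (t : ℕ) (N + 1) = (t : ℕ)
          omega
        · intro t' ht'
          simp only [Finset.mem_Ioc] at ht'
          show min t' (N + 1) = t'
          omega
        · intro t ht
          simp only [Finset.mem_filter, Finset.mem_univ, true_and, Fin.lt_def, hufval] at ht
          rw [if_pos ⟨ht.1, ht.2⟩]
          congr 1
          rw [hsN]
          dsimp only
          rw [dif_pos (by omega : (t : ℕ) ≤ N + 1)]
      rw [hzeq, ← hsum]
      congr 1
      congr 1
      rw [hsN]
      dsimp only
      rw [dif_pos (by omega : u ≤ N + 1)]
  -- apply the main lemma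
  obtain ⟨σ, w, κ, -, -, -, hrows⟩ := hRV sN hsNpos χ
  -- pigeonhole: some colour appears on at least m+1 levels
  have hex : ∃ κstar ∈ (Finset.univ : Finset (Fin r)), m <
      ((Finset.range (K + 1)).filter fun l => κ l = κstar).card := by
    refine Finset.exists_lt_card_fiber_of_mul_lt_card_of_maps_to
      (fun a _ => Finset.mem_univ (κ a)) ?_
    rw [Finset.card_univ, Fintype.card_fin, Finset.card_range, hK, Nat.mul_add, Nat.mul_one]
    omega
  obtain ⟨κstar, -, hκcard⟩ := hex
  set F := (Finset.range (K + 1)).filter fun l => κ l = κstar with hF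
  have hFcard : m + 1 ≤ F.card := hκcard
  set g := F.orderEmbOfCardLe hFcard with hg
  have hgmem : ∀ a, g a ∈ F := fun a => F.orderEmbOfCardLe_mem hFcard a
  have hgK : ∀ a, g a ≤ K := by
    intro a
    have := hgmem a
    rw [hF] at this
    simp only [Finset.mem_filter, Finset.mem_range] at this
    omega
  have hgκ : ∀ a, κ (g a) = κstar := by
    intro a
    have := hgmem a
    rw [hF] at this
    simp only [Finset.mem_filter] at this
    exact this.2
  -- the new generators
  set τ : Fin (m + 1) → ℤ := fun a => σ (g a) with hτ
  -- the key fact about the rows of the candidate set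
  have hkey : ∀ (a : Fin (m + 1)) (i : Fin (m + 1) → ℤ), (∀ t, |i t| ≤ (p : ℤ)) →
      ((c : ℤ) * τ a + ∑ t ∈ Finset.univ.filter (fun t => a < t), i t * τ t) ∈ T ∧
      χ ((c : ℤ) * τ a + ∑ t ∈ Finset.univ.filter (fun t => a < t), i t * τ t) = κstar := by
    intro a i hi
    set ib : ℕ → ℤ := fun t' => if h : ∃ l : Fin (m + 1), (g l : ℕ) = t' then i h.choose else 0
      with hib
    have hibbd : ∀ t', |ib t'| ≤ (p : ℤ) := by
      intro t'
      rw [hib]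
      dsimp only
      by_cases h : ∃ l : Fin (m + 1), (g l : ℕ) = t'
      · rw [dif_pos h]
        exact hi _
      · rw [dif_neg h]
        simp
    have hsum : ∑ t ∈ Finset.univ.filter (fun t => a < t), i t * τ t
        = ∑ t' ∈ Finset.Ioc (g a) K, ib t' * σ t' := by
      have hsub : (Finset.univ.filter (fun t => a < t)).image (fun l : Fin (m + 1) => g l)
          ⊆ Finset.Ioc (g a) K := by
        intro t' ht'
        simp only [Finset.mem_image, Finset.mem_filter, Finset.mem_univ, true_and] at ht'
        obtain ⟨l, hl, rfl⟩ := ht'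
        simp only [Finset.mem_Ioc]
        exact ⟨g.strictMono hl, hgK l⟩
      rw [← Finset.sum_subset hsub ?_]
      · rw [Finset.sum_image (fun a _ b _ h => g.injective h)]
        refine Finset.sum_congr rfl fun l hl => ?_
        have hex' : ∃ l' : Fin (m + 1), g l' = g l := ⟨l, rfl⟩
        have h1 : ib (g l) = i l := by
          rw [hib]
          dsimp only
          rw [dif_pos hex']
          congr 1
          exact g.injective hex'.choose_spec
        rw [h1]
      · intro t' ht' hnt'
        rw [hib]
        dsimp only
        rw [dif_neg, zero_mul]
        rintro ⟨l, rfl⟩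
        simp only [Finset.mem_Ioc] at ht'
        refine hnt' (Finset.mem_image.mpr ⟨l, ?_, rfl⟩)
        simp only [Finset.mem_filter, Finset.mem_univ, true_and]
        exact g.strictMono.lt_iff_lt.mp ht'.1
    obtain ⟨hmem, hχval⟩ := hrows (g a) (hgK a) ib hibbd
    rw [hsum, show τ a = σ (g a) from rfl]
    exact ⟨hbridge _ hmem, by rw [hχval]; exact hgκ a⟩
  -- positivity of the generators
  have hτpos : ∀ a, 0 < τ a := by
    intro a
    have h0 := (hkey a 0 (fun t => by simp)).1
    rw [show (c : ℤ) * τ a + ∑ t ∈ Finset.univ.filter (fun t => a < t),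
        (0 : Fin (m + 1) → ℤ) t * τ t = (c : ℤ) * τ a by simp] at h0
    have h4 := hTpos _ h0
    have hci : (0 : ℤ) < (c : ℤ) := by exact_mod_cast hc
    nlinarith
  -- conclusion
  refine ⟨κstar, ⋃ u : Fin (m + 1), { z : ℤ | ∃ i : Fin (m + 1) → ℤ,
      (∀ t, |i t| ≤ (p : ℤ)) ∧
      z = (c : ℤ) * τ u + ∑ t ∈ Finset.univ.filter (fun t => u < t), i t * τ t }, ?_, ?_⟩
  · intro z hz
    obtain ⟨a, i, hi, rfl⟩ := by
      simpa only [Set.mem_iUnion, Set.mem_setOf_eq] using hz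
    obtain ⟨hmem, hχval⟩ := hkey a i hi
    have := hχT _ hmem
    rwa [hχval] at this
  · exact ⟨τ, hτpos, rfl⟩
end

section
/- (Rado's theorem) Suppose that A is a k×d integer-valued matrix. Then A is partition regular if and only if A satisfies the columns condition. -/
/-- A `k × d` integer matrix `A` is partition regular if for every `r ∈ ℕ` there is `N`
such that every `r`-colouring of `[N] = {1,…,N}` has a colour class `C` containing
`x ∈ C^d` with `A x = 0`. -/
def IsPartitionRegular {k d : ℕ} (A : Matrix (Fin k) (Fin d) ℤ) : Prop :=
  ∀ r : ℕ, 0 < r → ∃ N : ℕ,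
    ∀ 𝒞 : Fin r → Set ℤ, IsColouring r 𝒞 (Set.Icc 1 (N : ℤ)) →
      ∃ (i : Fin r) (x : Fin d → ℤ), (∀ j, x j ∈ 𝒞 i) ∧ A.mulVec x = 0

/-- `A` satisfies the columns condition: there is a partition `I 0, …, I (t-1)` of the
column indices and rationals `α i j` (vanishing unless `i` lies in some earlier part)
such that for every `j` the sum of the columns in `I j` is the `α · j`-combination of
the columns in the earlier parts (in particular the columns in `I 0` sum to zero). -/
def ColumnsCondition {k d : ℕ} (A : Matrix (Fin k) (Fin d) ℤ) : Prop :=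
  ∃ (t : ℕ) (_ : 0 < t) (I : Fin t → Finset (Fin d)) (α : Fin d → Fin t → ℚ),
    (∀ i : Fin d, ∃! j : Fin t, i ∈ I j) ∧
    (∀ (i : Fin d) (j : Fin t), α i j ≠ 0 → ∃ j' : Fin t, j' < j ∧ i ∈ I j') ∧
    ∀ j : Fin t,
      (∑ i ∈ I j, (fun x => (A x i : ℚ))) = ∑ i : Fin d, α i j • (fun x => (A x i : ℚ))


/-- Row `j` of the `(m,p,c)`-set with generators `x`. -/
def Row (m p c : ℕ) (x : ℕ → ℤ) (j : ℕ) : Set ℤ :=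
  {z | ∃ l : ℕ → ℤ, (∀ n, |l n| ≤ p) ∧ z = c * x j + ∑ n ∈ Finset.Ico (j+1) m, l n * x n}

lemma row_finite (m p c : ℕ) (x : ℕ → ℤ) (j : ℕ) : (Row m p c x j).Finite := by
  apply Set.Finite.subset (Set.finite_Icc
    (c * x j - ∑ n ∈ Finset.Ico (j+1) m, (p:ℤ) * |x n|)
    (c * x j + ∑ n ∈ Finset.Ico (j+1) m, (p:ℤ) * |x n|))
  rintro z ⟨l, hl, rfl⟩
  have h : |∑ n ∈ Finset.Ico (j+1) m, l n * x n| ≤ ∑ n ∈ Finset.Ico (j+1) m, (p:ℤ) * |x n| := by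
    refine le_trans (Finset.abs_sum_le_sum_abs _ _) (Finset.sum_le_sum fun n _ => ?_)
    rw [abs_mul]
    exact mul_le_mul_of_nonneg_right (hl n) (abs_nonneg _)
  rw [abs_le] at h
  constructor <;> simp <;> linarith [h.1, h.2]

/-- Infinite van der Waerden over ℤ with positive terms. -/
lemma vdw_inf (L r : ℕ) (f : ℤ → Fin r) :
    ∃ a dd : ℤ, 1 ≤ a ∧ 1 ≤ dd ∧ ∃ col, ∀ i : ℤ, 0 ≤ i → i ≤ L → f (a + i * dd) = col := by
  obtain ⟨s, hs, b, col, h⟩ := Combinatorics.exists_mono_homothetic_copy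
    (Finset.range (L+1)) (fun n : ℕ => f ((n : ℤ) + 1))
  refine ⟨(b : ℤ) + 1, (s : ℤ), by omega, by exact_mod_cast hs, col, fun i hi hiL => ?_⟩
  have := h i.toNat (by simp; omega)
  simp only [smul_eq_mul] at this
  convert this using 2
  push_cast [Int.toNat_of_nonneg hi]
  ring

/-- Ultrafilter limit of a family of colourings. -/
lemma ultra_limit {r : ℕ} (hr : 0 < r) (F : ℕ → ℤ → Fin r) :
    ∃ g : ℤ → Fin r, ∀ z : ℤ, {N | F N z = g z} ∈ Filter.hyperfilter ℕ := by
  have key : ∀ z : ℤ, ∃ b : Fin r, {N | F N z = b} ∈ Filter.hyperfilter ℕ := by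
    intro z
    by_contra hcon
    push_neg at hcon
    have : ∀ b : Fin r, {N | F N z = b}ᶜ ∈ Filter.hyperfilter ℕ :=
      fun b => (Ultrafilter.compl_mem_iff_notMem).2 (hcon b)
    have h2 : (⋂ b : Fin r, {N | F N z = b}ᶜ) ∈ Filter.hyperfilter ℕ :=
      (Filter.iInter_mem).2 this
    obtain ⟨N, hN⟩ := ((Filter.hyperfilter ℕ).neBot.nonempty_of_mem h2)
    simp only [Set.mem_iInter, Set.mem_compl_iff, Set.mem_setOf_eq] at hN
    exact hN (F N z) rfl
  choose g hg using key
  exact ⟨g, hg⟩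

/-- Compactness: an "infinite" partition statement with finite positive witness sets
    implies a finitary one. -/
lemma finitize {r : ℕ} (hr : 0 < r) (G : (ℤ → Fin r) → (ℕ → ℤ) → Prop) (T : (ℕ → ℤ) → Set ℤ)
    (hG : ∀ f f' x, (∀ z ∈ T x, f z = f' z) → G f x → G f' x)
    (hall : ∀ f, ∃ x, G f x ∧ T x ⊆ Set.Ici 1 ∧ (T x).Finite) :
    ∃ N : ℕ, ∀ f, ∃ x, G f x ∧ T x ⊆ Set.Icc 1 (N : ℤ) := by
  by_contra hcon
  push_neg at hcon
  choose F hF using hcon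
  obtain ⟨g, hg⟩ := ultra_limit hr F
  obtain ⟨x, hGx, hT1, hTfin⟩ := hall g
  have hS : {N | ∀ z ∈ T x, F N z = g z} ∈ Filter.hyperfilter ℕ := by
    have : (⋂ z ∈ T x, {N | F N z = g z}) ∈ Filter.hyperfilter ℕ :=
      (Filter.biInter_mem hTfin).2 fun z _ => hg z
    filter_upwards [this] with N hN z hz
    exact Set.mem_iInter₂.mp hN z hz
  obtain ⟨M, hM⟩ := hTfin.bddAbove
  have hB : {N : ℕ | M ≤ (N : ℤ)} ∈ Filter.hyperfilter ℕ := by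
    have hsub : {N : ℕ | M ≤ (N : ℤ)}ᶜ ⊆ Set.Iio M.toNat := by
      intro N hN
      simp only [Set.mem_compl_iff, Set.mem_setOf_eq, not_le] at hN
      simp only [Set.mem_Iio]
      omega
    have hfin : ({N : ℕ | M ≤ (N : ℤ)}ᶜ).Finite := Set.Finite.subset (Set.finite_Iio _) hsub
    have := Filter.compl_mem_hyperfilter_of_finite hfin
    simpa using this
  obtain ⟨N, hN1, hN2⟩ := ((Filter.hyperfilter ℕ).neBot.nonempty_of_mem
    (Filter.inter_mem hS hB) : Set.Nonempty _)
  have hGN : G (F N) x := hG g (F N) x (fun z hz => (hN1 z hz).symm) hGx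
  exact hF N x hGN (fun z hz => ⟨hT1 hz, le_trans (hM hz) hN2⟩)

lemma one_le_mul3 {x y z : ℤ} (hx : 1 ≤ x) (hy : 1 ≤ y) (hz : 1 ≤ z) : 1 ≤ x * y * z := by
  have h1 : (1:ℤ) * 1 ≤ x * y := mul_le_mul hx hy one_pos.le (by linarith)
  have h2 : (1:ℤ) * 1 ≤ (x*y) * z := mul_le_mul (by linarith) hz one_pos.le (by nlinarith)
  linarith

/-- Infinite row-monochromatic statement. -/
def RMinf (m p c r : ℕ) : Prop := ∀ f : ℤ → Fin r, ∃ x : ℕ → ℤ,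
  (∀ j < m, 1 ≤ x j) ∧ (∀ j < m, Row m p c x j ⊆ Set.Ici 1) ∧
  (∀ j < m, ∃ i, ∀ z ∈ Row m p c x j, f z = i)

lemma RMinf_zero (p c r : ℕ) : RMinf 0 p c r :=
  fun _ => ⟨fun _ => 1, fun _ h => absurd h (by omega), fun _ h => absurd h (by omega),
    fun _ h => absurd h (by omega)⟩

lemma RMfin {m p c r : ℕ} (hr : 0 < r) (h : RMinf m p c r) :
    ∃ N : ℕ, ∀ f : ℤ → Fin r, ∃ x : ℕ → ℤ,
      (∀ j < m, 1 ≤ x j) ∧ (∀ j < m, Row m p c x j ⊆ Set.Icc 1 (N : ℤ)) ∧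
      (∀ j < m, ∃ i, ∀ z ∈ Row m p c x j, f z = i) := by
  obtain ⟨N, hN⟩ := finitize hr
    (G := fun f x => (∀ j < m, 1 ≤ x j) ∧ (∀ j < m, Row m p c x j ⊆ Set.Ici 1) ∧
      (∀ j < m, ∃ i, ∀ z ∈ Row m p c x j, f z = i))
    (T := fun x => ⋃ j ∈ Finset.range m, Row m p c x j)
    (by
      rintro f f' x hagree ⟨h1, h2, h3⟩
      refine ⟨h1, h2, fun j hj => ?_⟩
      obtain ⟨i, hi⟩ := h3 j hj
      exact ⟨i, fun z hz => by
        rw [← hagree z (Set.mem_iUnion₂.mpr ⟨j, Finset.mem_range.mpr hj, hz⟩)]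
        exact hi z hz⟩)
    (by
      intro f
      obtain ⟨x, h1, h2, h3⟩ := h f
      refine ⟨x, ⟨h1, h2, h3⟩, ?_, ?_⟩
      · intro z hz
        obtain ⟨j, hj, hzj⟩ := Set.mem_iUnion₂.mp hz
        exact h2 j (by simpa using hj) hzj
      · exact Set.Finite.biUnion (Finset.finite_toSet _) (fun j _ => row_finite m p c x j))
  refine ⟨N, fun f => ?_⟩
  obtain ⟨x, ⟨h1, _, h3⟩, hT⟩ := hN f
  exact ⟨x, h1, fun j hj z hz => hT (Set.mem_iUnion₂.mpr ⟨j, Finset.mem_range.mpr hj, hz⟩), h3⟩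

lemma cy_mem_row (m p c : ℕ) (y : ℕ → ℤ) (j : ℕ) : (c : ℤ) * y j ∈ Row m p c y j :=
  ⟨fun _ => 0, fun n => by simp, by simp⟩

lemma RMinf_succ {m p c r : ℕ} (hc : 0 < c) (hr : 0 < r) (h : RMinf m p c r) :
    RMinf (m+1) p c r := by
  obtain ⟨N, hN⟩ := RMfin hr h
  set L : ℕ := 2 * (m * (p * N)) with hL
  intro f
  obtain ⟨a, dd, ha, hdd, col, hcol⟩ := vdw_inf L r (fun z => f ((c : ℤ) * z))
  obtain ⟨y, hy1, hy2, hy3⟩ := hN (fun z => f ((c : ℤ) * dd * z))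
  have hyN : ∀ k < m, 1 ≤ y k ∧ y k ≤ (N : ℤ) := by
    intro k hk
    have hmem := hy2 k hk (cy_mem_row m p c y k)
    have hyk : 1 ≤ y k := hy1 k hk
    have : (c:ℤ) * y k ≤ N := hmem.2
    have : y k ≤ (c:ℤ) * y k := le_mul_of_one_le_left (by linarith) (by exact_mod_cast hc)
    exact ⟨hyk, by linarith⟩
  set X : ℕ → ℤ := fun j => if j = 0 then a + (m * (p * N) : ℕ) * dd else (c:ℤ) * dd * y (j-1)
    with hX
  have hX0 : X 0 = a + (m * (p * N) : ℕ) * dd := by simp [hX]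
  have hXs : ∀ j : ℕ, j ≠ 0 → X j = (c:ℤ) * dd * y (j-1) := fun j hj => by
    rw [hX]; exact if_neg hj
  -- Row 0 structure
  have row0 : ∀ z ∈ Row (m+1) p c X 0, ∃ i : ℤ, 0 ≤ i ∧ i ≤ L ∧ z = (c:ℤ) * (a + i * dd) := by
    rintro z ⟨l, hl, rfl⟩
    have e1 : ∑ n ∈ Finset.Ico (0+1) (m+1), l n * X n
        = ∑ k ∈ Finset.range m, l (1+k) * ((c:ℤ) * dd * y k) := by
      rw [Finset.sum_Ico_eq_sum_range]
      simp only [Nat.add_sub_cancel]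
      refine Finset.sum_congr rfl fun k _ => ?_
      rw [hXs (1+k) (by omega)]
      have hidx : 1 + k - 1 = k := by omega
      rw [hidx]
    set T : ℤ := ∑ k ∈ Finset.range m, l (1+k) * y k with hT
    have e2 : ∑ k ∈ Finset.range m, l (1+k) * ((c:ℤ) * dd * y k) = (c:ℤ) * dd * T := by
      rw [hT, Finset.mul_sum]
      exact Finset.sum_congr rfl fun k _ => by ring
    have hTbound : |T| ≤ (m * (p * N) : ℕ) := by
      rw [hT]
      refine le_trans (Finset.abs_sum_le_sum_abs _ _) ?_
      have : ∀ k ∈ Finset.range m, |l (1+k) * y k| ≤ ((p * N : ℕ) : ℤ) := by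
        intro k hk
        rw [abs_mul]
        have h1 := hl (1+k)
        have h2 := (hyN k (Finset.mem_range.mp hk))
        have h3 : |y k| ≤ (N:ℤ) := abs_le.mpr ⟨by linarith [h2.1], h2.2⟩
        calc |l (1+k)| * |y k| ≤ (p:ℤ) * (N:ℤ) :=
              mul_le_mul h1 h3 (abs_nonneg _) (by positivity)
          _ = ((p * N : ℕ) : ℤ) := by push_cast; ring
      refine le_trans (Finset.sum_le_sum this) ?_
      rw [Finset.sum_const, Finset.card_range, nsmul_eq_mul]
      push_cast; ring_nf; rfl
    obtain ⟨hTb1, hTb2⟩ := abs_le.mp hTbound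
    refine ⟨(m * (p * N) : ℕ) + T, by linarith, ?_, ?_⟩
    · push_cast [hL] at hTb2 ⊢
      linarith
    · rw [e1, e2, hX0]
      ring
  -- Rows j+1 structure
  have rowsucc : ∀ j' < m, ∀ z ∈ Row (m+1) p c X (j'+1),
      ∃ w ∈ Row m p c y j', z = (c:ℤ) * dd * w := by
    rintro j' hj' z ⟨l, hl, rfl⟩
    refine ⟨(c:ℤ) * y j' + ∑ n ∈ Finset.Ico (j'+1) m, l (n+1) * y n,
      ⟨fun n => l (n+1), fun n => hl (n+1), rfl⟩, ?_⟩
    have e1 : ∑ n ∈ Finset.Ico (j'+1+1) (m+1), l n * X n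
        = ∑ k ∈ Finset.range (m - (j'+1)), l (j'+2+k) * ((c:ℤ) * dd * y (j'+1+k)) := by
      rw [Finset.sum_Ico_eq_sum_range]
      have : m + 1 - (j' + 1 + 1) = m - (j'+1) := by omega
      rw [this]
      refine Finset.sum_congr rfl fun k _ => ?_
      rw [hXs (j'+1+1+k) (by omega)]
      have h1 : j' + 1 + 1 + k - 1 = j' + 1 + k := by omega
      have h2 : j' + 1 + 1 + k = j' + 2 + k := by omega
      rw [h1, h2]
    have e2 : ∑ n ∈ Finset.Ico (j'+1) m, l (n+1) * y n
        = ∑ k ∈ Finset.range (m - (j'+1)), l (j'+1+k+1) * y (j'+1+k) := by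
      rw [Finset.sum_Ico_eq_sum_range]
    have hX2 : X (j'+1) = (c:ℤ) * dd * y j' := by
      rw [hXs (j'+1) (by omega)]; simp
    rw [e1, e2, hX2, mul_add, Finset.mul_sum]
    congr 1
    · ring
    · refine Finset.sum_congr rfl fun k _ => ?_
      have : j' + 2 + k = j' + 1 + k + 1 := by omega
      rw [this]; ring
  refine ⟨X, ?_, ?_, ?_⟩
  · intro j hj
    rcases Nat.eq_zero_or_pos j with rfl | hjpos
    · rw [hX0]
      have : (0:ℤ) ≤ (m * (p * N) : ℕ) := by positivity
      nlinarith
    · obtain ⟨j', rfl⟩ : ∃ j', j = j' + 1 := ⟨j - 1, by omega⟩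
      rw [hXs (j'+1) (by omega), Nat.add_sub_cancel]
      have := (hyN j' (by omega)).1
      have hc' : (1:ℤ) ≤ (c:ℤ) := by exact_mod_cast hc
      exact one_le_mul3 hc' hdd this
  · intro j hj z hz
    rcases Nat.eq_zero_or_pos j with rfl | hjpos
    · obtain ⟨i, hi0, hiL, rfl⟩ := row0 z hz
      have hc' : (1:ℤ) ≤ (c:ℤ) := by exact_mod_cast hc
      have : (1:ℤ) ≤ a + i * dd := by nlinarith
      simp only [Set.mem_Ici]
      nlinarith
    · obtain ⟨j', rfl⟩ : ∃ j', j = j' + 1 := ⟨j - 1, by omega⟩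
      obtain ⟨w, hw, rfl⟩ := rowsucc j' (by omega) z hz
      have hw1 : 1 ≤ w := (hy2 j' (by omega) hw).1
      have hc' : (1:ℤ) ≤ (c:ℤ) := by exact_mod_cast hc
      simp only [Set.mem_Ici]
      exact one_le_mul3 hc' hdd hw1
  · intro j hj
    rcases Nat.eq_zero_or_pos j with rfl | hjpos
    · refine ⟨col, fun z hz => ?_⟩
      obtain ⟨i, hi0, hiL, rfl⟩ := row0 z hz
      exact hcol i hi0 (by exact_mod_cast hiL)
    · obtain ⟨j', rfl⟩ : ∃ j', j = j' + 1 := ⟨j - 1, by omega⟩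
      obtain ⟨i, hi⟩ := hy3 j' (by omega)
      refine ⟨i, fun z hz => ?_⟩
      obtain ⟨w, hw, rfl⟩ := rowsucc j' (by omega) z hz
      exact hi w hw

lemma RMinf_all (m p c r : ℕ) (hc : 0 < c) (hr : 0 < r) : RMinf m p c r := by
  induction m with
  | zero => exact RMinf_zero p c r
  | succ m ih => exact RMinf_succ hc hr ih

/-- Deuber's theorem, finitary form: monochromatic (m,p,c)-sets. -/
lemma deuber (m p c r : ℕ) (hc : 0 < c) (hr : 0 < r) :
    ∃ N : ℕ, ∀ f : ℤ → Fin r, ∃ x : ℕ → ℤ,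
      (∀ j < m, Row m p c x j ⊆ Set.Icc 1 (N:ℤ)) ∧
      ∃ i, ∀ j < m, ∀ z ∈ Row m p c x j, f z = i := by
  set M : ℕ := r * m with hM
  obtain ⟨N, hN⟩ := RMfin hr (RMinf_all M p c r hc hr)
  refine ⟨N, fun f => ?_⟩
  obtain ⟨x, hx1, hx2, hx3⟩ := hN f
  have i0 : Fin r := ⟨0, hr⟩
  choose g hg using hx3
  set gcol : ℕ → Fin r := fun j => if h : j < M then g j h else i0 with hgcol
  have hgc : ∀ (j : ℕ) (h : j < M), ∀ z ∈ Row M p c x j, f z = gcol j := by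
    intro j h z hz
    rw [hgcol]
    simp only [dif_pos h]
    exact hg j h z hz
  have hpig : ∃ i ∈ Finset.univ (α := Fin r),
      m ≤ ((Finset.range M).filter (fun j => gcol j = i)).card := by
    apply Finset.exists_le_card_fiber_of_mul_le_card_of_maps_to
      (fun a _ => Finset.mem_univ _) ⟨i0, Finset.mem_univ _⟩
    simp [hM]
  obtain ⟨i, _, hcard⟩ := hpig
  obtain ⟨J, hJsub, hJcard⟩ := Finset.exists_subset_card_eq hcard
  have hJmem : ∀ j ∈ J, j < M ∧ gcol j = i := by
    intro j hj
    have := hJsub hj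
    simp only [Finset.mem_filter, Finset.mem_range] at this
    exact this
  set e := J.orderIsoOfFin hJcard with he
  set jfun : ℕ → ℕ := fun l => if h : l < m then (e ⟨l, h⟩ : ℕ) else M + l with hjfun
  have hjmem : ∀ l, l < m → jfun l ∈ J := by
    intro l hl
    rw [hjfun]; simp only [dif_pos hl]
    exact (e ⟨l, hl⟩).2
  have hjmono : ∀ l1 l2, l1 < l2 → l2 < m → jfun l1 < jfun l2 := by
    intro l1 l2 h12 h2
    rw [hjfun]; simp only [dif_pos (lt_trans h12 h2), dif_pos h2]
    have : (⟨l1, lt_trans h12 h2⟩ : Fin m) < ⟨l2, h2⟩ := h12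
    exact_mod_cast e.strictMono this
  have hjinj : ∀ l1 l2, l1 < m → l2 < m → l1 ≠ l2 → jfun l1 ≠ jfun l2 := by
    intro l1 l2 h1 h2 hne
    rcases lt_or_gt_of_ne hne with h | h
    · exact ne_of_lt (hjmono l1 l2 h h2)
    · exact (ne_of_lt (hjmono l2 l1 h h1)).symm
  set X : ℕ → ℤ := fun l => x (jfun l) with hXdef
  have rowsub : ∀ l, l < m → Row m p c X l ⊆ Row M p c x (jfun l) := by
    rintro l hl z ⟨lam, hlam, rfl⟩
    set μ : ℕ → ℤ := fun ttt => ∑ n ∈ Finset.Ico (l+1) m, if jfun n = ttt then lam n else 0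
      with hμ
    have hμbound : ∀ ttt, |μ ttt| ≤ (p:ℤ) := by
      intro ttt
      simp only [hμ]
      by_cases hex : ∃ n₀ ∈ Finset.Ico (l+1) m, jfun n₀ = ttt
      · obtain ⟨n₀, hn₀, hjn₀⟩ := hex
        have : (∑ n ∈ Finset.Ico (l+1) m, if jfun n = ttt then lam n else 0) = lam n₀ := by
          rw [Finset.sum_eq_single_of_mem n₀ hn₀]
          · rw [if_pos hjn₀]
          · intro n hn hne
            have h1 := Finset.mem_Ico.mp hn
            have h2 := Finset.mem_Ico.mp hn₀
            rw [if_neg]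
            rw [← hjn₀]
            exact hjinj n n₀ h1.2 h2.2 hne
        rw [this]; exact hlam n₀
      · push_neg at hex
        have : (∑ n ∈ Finset.Ico (l+1) m, if jfun n = ttt then lam n else 0) = 0 :=
          Finset.sum_eq_zero fun n hn => if_neg (hex n hn)
        rw [this]; positivity
    refine ⟨μ, hμbound, ?_⟩
    have key : ∑ ttt ∈ Finset.Ico (jfun l + 1) M, μ ttt * x ttt
        = ∑ n ∈ Finset.Ico (l+1) m, lam n * x (jfun n) := by
      simp only [hμ]
      simp_rw [Finset.sum_mul, ite_mul, zero_mul]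
      rw [Finset.sum_comm]
      refine Finset.sum_congr rfl fun n hn => ?_
      have h1 := Finset.mem_Ico.mp hn
      have hmem : jfun n ∈ Finset.Ico (jfun l + 1) M := by
        rw [Finset.mem_Ico]
        constructor
        · exact Nat.succ_le_of_lt (hjmono l n h1.1 h1.2)
        · exact (hJmem _ (hjmem n h1.2)).1
      rw [Finset.sum_ite_eq _ (jfun n) (fun ttt => lam n * x ttt), if_pos hmem]
    rw [key, hXdef]
  refine ⟨X, ?_, i, ?_⟩
  · intro j hj z hz
    exact hx2 (jfun j) (hJmem _ (hjmem j hj)).1 (rowsub j hj hz)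
  · intro j hj z hz
    have h1 := (hJmem _ (hjmem j hj))
    exact (hgc (jfun j) h1.1 z (rowsub j hj hz)).trans h1.2
theorem cc_imp_pr {k d : ℕ} (A : Matrix (Fin k) (Fin d) ℤ) (h : ColumnsCondition A) :
    IsPartitionRegular A := by
  obtain ⟨t, ht, I, α, hpart, hsupp, heq⟩ := h
  -- the part containing each column index
  have hcls : ∀ i : Fin d, ∃ j, i ∈ I j ∧ ∀ y, i ∈ I y → y = j := by
    intro i
    obtain ⟨j, hj, hju⟩ := hpart i
    exact ⟨j, hj, hju⟩
  choose cls hclsmem hclsu using hcls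
  have hsupp' : ∀ (i : Fin d) (l : Fin t), α i l ≠ 0 → cls i < l := by
    intro i l hne
    obtain ⟨j', hj'lt, hj'mem⟩ := hsupp i l hne
    rwa [hclsu i j' hj'mem] at hj'lt
  -- clear denominators
  set q : ℕ := ∏ i : Fin d, ∏ l : Fin t, (α i l).den with hqdef
  have hq : 0 < q := Finset.prod_pos fun i _ => Finset.prod_pos fun l _ => (α i l).pos
  have hden : ∀ (i : Fin d) (l : Fin t), (α i l).den ∣ q := by
    intro i l
    calc (α i l).den ∣ ∏ l' : Fin t, (α i l').den :=
          Finset.dvd_prod_of_mem _ (Finset.mem_univ l)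
      _ ∣ q := Finset.dvd_prod_of_mem _ (Finset.mem_univ i)
  set β : Fin d → Fin t → ℤ := fun i l => (q / (α i l).den : ℕ) * (α i l).num with hβdef
  have hβ : ∀ (i : Fin d) (l : Fin t), (β i l : ℚ) = (q : ℚ) * α i l := by
    intro i l
    have hd : ((α i l).den : ℕ) * (q / (α i l).den) = q := Nat.mul_div_cancel' (hden i l)
    calc (β i l : ℚ) = ((q / (α i l).den : ℕ) : ℚ) * ((α i l).num : ℚ) := by
          rw [hβdef, Int.cast_mul, Int.cast_natCast]
      _ = ((q / (α i l).den : ℕ) : ℚ) * (α i l * (α i l).den) := by rw [Rat.mul_den_eq_num]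
      _ = ((((α i l).den : ℕ) * (q / (α i l).den) : ℕ) : ℚ) * α i l := by push_cast; ring
      _ = (q : ℚ) * α i l := by rw [hd]
  have hβzero : ∀ (i : Fin d) (l : Fin t), ¬ (cls i < l) → β i l = 0 := by
    intro i l hlt
    have : α i l = 0 := by
      by_contra hne
      exact hlt (hsupp' i l hne)
    rw [hβdef]
    simp [this]
  set p : ℕ := ∑ i : Fin d, ∑ l : Fin t, (β i l).natAbs with hpdef
  have hβbound : ∀ (i : Fin d) (l : Fin t), |β i l| ≤ (p : ℤ) := by
    intro i l
    have h1 : (β i l).natAbs ≤ p := by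
      rw [hpdef]
      calc (β i l).natAbs ≤ ∑ l' : Fin t, (β i l').natAbs :=
            Finset.single_le_sum (f := fun l' => (β i l').natAbs)
              (fun _ _ => Nat.zero_le _) (Finset.mem_univ l)
        _ ≤ _ := Finset.single_le_sum (f := fun i' => ∑ l' : Fin t, (β i' l').natAbs)
            (fun _ _ => Nat.zero_le _) (Finset.mem_univ i)
    calc |β i l| = ((β i l).natAbs : ℤ) := Int.abs_eq_natAbs _
      _ ≤ (p : ℤ) := by exact_mod_cast h1
  intro r hr
  obtain ⟨N, hN⟩ := deuber t p q r hq hr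
  refine ⟨N, fun 𝒞 hcol => ?_⟩
  -- colouring as a function
  have hFex : ∀ z : ℤ, z ∈ Set.Icc 1 (N : ℤ) → ∃ i, z ∈ 𝒞 i := by
    intro z hz
    exact Set.mem_iUnion.mp (hcol.2 hz)
  set f : ℤ → Fin r := fun z => if h : z ∈ Set.Icc 1 (N : ℤ) then (hFex z h).choose else ⟨0, hr⟩
    with hfdef
  have hf : ∀ z : ℤ, z ∈ Set.Icc 1 (N : ℤ) → z ∈ 𝒞 (f z) := by
    intro z hz
    rw [hfdef]
    simp only [dif_pos hz]
    exact (hFex z hz).choose_spec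
  obtain ⟨x, hrows, i, hmono⟩ := hN f
  -- the solution vector
  set ξ : Fin d → ℤ := fun idx => (q : ℤ) * x (cls idx) - ∑ l : Fin t, β idx l * x l with hξdef
  have hξmem : ∀ idx : Fin d, ξ idx ∈ Row t p q x (cls idx) := by
    intro idx
    set lam : ℕ → ℤ := fun n => if h : n < t then -β idx ⟨n, h⟩ else 0 with hlamdef
    refine ⟨lam, ?_, ?_⟩
    · intro n
      rw [hlamdef]
      by_cases h : n < t
      · simp only [dif_pos h, abs_neg]
        exact hβbound idx ⟨n, h⟩
      · simp only [dif_neg h, abs_zero]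
        positivity
    · set F : ℕ → ℤ := fun n => if h : n < t then β idx ⟨n, h⟩ * x n else 0 with hFdef
      have e0 : ∑ n ∈ Finset.range t, F n = ∑ l : Fin t, β idx l * x (l : ℕ) := by
        rw [← Fin.sum_univ_eq_sum_range F t]
        refine Finset.sum_congr rfl fun l _ => ?_
        simp only [hFdef]
        rw [dif_pos l.isLt]
      have hclslt : ((cls idx : ℕ)) < t := (cls idx).isLt
      have e1 : ∑ n ∈ Finset.range t, F n
          = ∑ n ∈ Finset.Ico 0 ((cls idx : ℕ) + 1), F n
            + ∑ n ∈ Finset.Ico ((cls idx : ℕ) + 1) t, F n := by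
        rw [Finset.range_eq_Ico]
        exact (Finset.sum_Ico_consecutive F (Nat.zero_le _)
          (show (cls idx : ℕ) + 1 ≤ t by omega)).symm
      have e2 : ∑ n ∈ Finset.Ico 0 ((cls idx : ℕ) + 1), F n = 0 := by
        refine Finset.sum_eq_zero fun n hn => ?_
        have hn' := Finset.mem_Ico.mp hn
        have hnt : n < t := by omega
        simp only [hFdef]
        rw [dif_pos hnt]
        have hz : β idx ⟨n, hnt⟩ = 0 := by
          refine hβzero idx ⟨n, hnt⟩ (fun hlt => ?_)
          have : (cls idx : ℕ) < n := hlt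
          omega
        rw [hz, zero_mul]
      have e3 : ∑ l : Fin t, β idx l * x (l : ℕ) = ∑ n ∈ Finset.Ico ((cls idx : ℕ) + 1) t, F n := by
        rw [← e0, e1, e2, zero_add]
      have e4 : ∑ n ∈ Finset.Ico ((cls idx : ℕ) + 1) t, lam n * x n
          = - ∑ n ∈ Finset.Ico ((cls idx : ℕ) + 1) t, F n := by
        rw [← Finset.sum_neg_distrib]
        refine Finset.sum_congr rfl fun n hn => ?_
        have hnt : n < t := (Finset.mem_Ico.mp hn).2
        simp only [hlamdef, hFdef]
        rw [dif_pos hnt, dif_pos hnt, neg_mul]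
      rw [hξdef]
      simp only
      rw [e3, e4]
      ring
  -- the solution solves the system
  have hsol : A.mulVec ξ = 0 := by
    funext xk
    have expand : ∀ idx : Fin d, ((ξ idx : ℤ) : ℚ)
        = (q : ℚ) * ((x ((cls idx : ℕ)) : ℤ) : ℚ)
          - (q : ℚ) * ∑ l : Fin t, α idx l * ((x ((l : ℕ)) : ℤ) : ℚ) := by
      intro idx
      rw [hξdef]
      push_cast
      rw [Finset.mul_sum]
      congr 1
      refine Finset.sum_congr rfl fun l _ => ?_
      rw [hβ idx l]
      ring
    set S : Fin d → ℚ := fun idx => ∑ l : Fin t, α idx l * ((x ((l : ℕ)) : ℤ) : ℚ) with hSdef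
    have key : (∑ idx : Fin d, ((A xk idx : ℤ) : ℚ) * ((ξ idx : ℤ) : ℚ)) = 0 := by
      have step1 : ∑ idx : Fin d, ((A xk idx : ℤ) : ℚ) * ((ξ idx : ℤ) : ℚ)
          = (q : ℚ) * ((∑ idx : Fin d, ((A xk idx : ℤ) : ℚ) * ((x ((cls idx : ℕ)) : ℤ) : ℚ))
            - ∑ idx : Fin d, S idx * ((A xk idx : ℤ) : ℚ)) := by
        rw [mul_sub, Finset.mul_sum, Finset.mul_sum, ← Finset.sum_sub_distrib]
        refine Finset.sum_congr rfl fun idx _ => ?_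
        rw [expand idx]
        simp only [hSdef]
        ring
      have step2 : ∑ idx : Fin d, ((A xk idx : ℤ) : ℚ) * ((x ((cls idx : ℕ)) : ℤ) : ℚ)
          = ∑ l : Fin t, ((x ((l : ℕ)) : ℤ) : ℚ) * ∑ idx ∈ I l, ((A xk idx : ℤ) : ℚ) := by
        rw [← Finset.sum_fiberwise Finset.univ cls
          (fun idx => ((A xk idx : ℤ) : ℚ) * ((x ((cls idx : ℕ)) : ℤ) : ℚ))]
        refine Finset.sum_congr rfl fun l _ => ?_
        have hfib : Finset.univ.filter (fun idx => cls idx = l) = I l := by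
          ext idx
          simp only [Finset.mem_filter, Finset.mem_univ, true_and]
          constructor
          · rintro rfl; exact hclsmem idx
          · intro h; exact (hclsu idx l h).symm
        calc ∑ idx ∈ Finset.univ.filter (fun idx => cls idx = l),
              ((A xk idx : ℤ) : ℚ) * ((x ((cls idx : ℕ)) : ℤ) : ℚ)
            = ∑ idx ∈ Finset.univ.filter (fun idx => cls idx = l),
              ((A xk idx : ℤ) : ℚ) * ((x ((l : ℕ)) : ℤ) : ℚ) := by
              refine Finset.sum_congr rfl fun idx hidx => ?_
              rw [(Finset.mem_filter.mp hidx).2]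
          _ = (∑ idx ∈ Finset.univ.filter (fun idx => cls idx = l),
              ((A xk idx : ℤ) : ℚ)) * ((x ((l : ℕ)) : ℤ) : ℚ) := (Finset.sum_mul _ _ _).symm
          _ = ((x ((l : ℕ)) : ℤ) : ℚ) * ∑ idx ∈ I l, ((A xk idx : ℤ) : ℚ) := by
              rw [hfib]; ring
      have step3 : ∀ l : Fin t, (∑ idx ∈ I l, ((A xk idx : ℤ) : ℚ))
          = ∑ idx : Fin d, α idx l * ((A xk idx : ℤ) : ℚ) := by
        intro l
        simpa using congrFun (heq l) xk
      have step4 : ∑ idx : Fin d, S idx * ((A xk idx : ℤ) : ℚ)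
          = ∑ l : Fin t, ((x ((l : ℕ)) : ℤ) : ℚ)
              * ∑ idx : Fin d, α idx l * ((A xk idx : ℤ) : ℚ) := by
        simp only [hSdef, Finset.sum_mul]
        rw [Finset.sum_comm]
        refine Finset.sum_congr rfl fun l _ => ?_
        rw [Finset.mul_sum]
        exact Finset.sum_congr rfl fun idx _ => by ring
      rw [step1, step2, step4, ← Finset.sum_sub_distrib]
      have : ∀ l ∈ Finset.univ (α := Fin t),
          ((x ((l : ℕ)) : ℤ) : ℚ) * (∑ idx ∈ I l, ((A xk idx : ℤ) : ℚ))
            - ((x ((l : ℕ)) : ℤ) : ℚ) * ∑ idx : Fin d, α idx l * ((A xk idx : ℤ) : ℚ) = 0 := by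
        intro l _
        rw [step3 l]
        ring
      rw [Finset.sum_eq_zero this, mul_zero]
    have hcast : ((A.mulVec ξ xk : ℤ) : ℚ) = 0 := by
      simp only [Matrix.mulVec, dotProduct]
      push_cast
      exact key
    have h0 : A.mulVec ξ xk = 0 := by exact_mod_cast hcast
    simpa using h0
  -- assemble
  refine ⟨i, ξ, fun idx => ?_, hsol⟩
  have hmem := hξmem idx
  have hIcc : ξ idx ∈ Set.Icc 1 (N : ℤ) := hrows ((cls idx : ℕ)) (cls idx).isLt hmem
  have hcolour : f (ξ idx) = i := hmono ((cls idx : ℕ)) (cls idx).isLt _ hmem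
  have := hf (ξ idx) hIcc
  rwa [hcolour] at this

/-! ### Forward direction: partition regular implies columns condition -/

lemma den_dvd_cast {a : ℚ} {D : ℕ} (h : a.den ∣ D) :
    ((((D / a.den : ℕ) : ℤ) * a.num : ℤ) : ℚ) = (D : ℚ) * a := by
  have hd : (a.den : ℕ) * (D / a.den) = D := Nat.mul_div_cancel' h
  calc ((((D / a.den : ℕ) : ℤ) * a.num : ℤ) : ℚ)
      = ((D / a.den : ℕ) : ℚ) * (a.num : ℚ) := by rw [Int.cast_mul, Int.cast_natCast]
    _ = ((D / a.den : ℕ) : ℚ) * (a * (a.den : ℚ)) := by rw [Rat.mul_den_eq_num]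
    _ = (((a.den : ℕ) * (D / a.den) : ℕ) : ℚ) * a := by push_cast; ring
    _ = (D : ℚ) * a := by rw [hd]

lemma rank_le_iff {d : ℕ} (g : Fin d → ℕ) (j j' : Fin d) :
    g j ≤ g j' ↔ (Finset.univ.filter (fun i => g i < g j)).card
      ≤ (Finset.univ.filter (fun i => g i < g j')).card := by
  constructor
  · intro h
    exact Finset.card_le_card (fun i hi => by
      simp only [Finset.mem_filter, Finset.mem_univ, true_and] at hi ⊢
      omega)
  · intro h
    by_contra hc
    push_neg at hc
    have hsub : (Finset.univ.filter (fun i => g i < g j'))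
        ⊆ (Finset.univ.filter (fun i => g i < g j)) := fun i hi => by
      simp only [Finset.mem_filter, Finset.mem_univ, true_and] at hi ⊢
      omega
    have hmem : j' ∈ (Finset.univ.filter (fun i => g i < g j)) := by
      simp only [Finset.mem_filter, Finset.mem_univ, true_and]; omega
    have hnot : j' ∉ (Finset.univ.filter (fun i => g i < g j')) := by
      simp only [Finset.mem_filter, Finset.mem_univ, true_and]; omega
    have := Finset.card_lt_card ((Finset.ssubset_iff_of_subset hsub).mpr ⟨j', hmem, hnot⟩)
    omega

theorem pr_imp_cc {k d : ℕ} (A : Matrix (Fin k) (Fin d) ℤ) (h : IsPartitionRegular A) :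
    ColumnsCondition A := by
  rcases Nat.eq_zero_or_pos d with rfl | hd
  · exact ⟨1, one_pos, fun _ => ∅, fun i _ => 0, fun i => i.elim0,
      fun i _ _ => i.elim0, fun j => by simp⟩
  haveI : Nonempty (Fin d) := ⟨⟨0, hd⟩⟩
  -- Step 1: for each prime, a monochromatic solution for the ordCompl colouring
  have hdata : ∀ P : {p : ℕ // p.Prime}, ∃ (x : Fin d → ℕ) (cc : ℕ),
      (∀ j, x j ≠ 0) ∧ (A.mulVec (fun j => ((x j : ℕ) : ℤ)) = 0) ∧ 0 < cc ∧ cc < P.val ∧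
      ∀ j, (x j / P.val ^ (x j).factorization P.val) % P.val = cc := by
    rintro ⟨p, hp⟩
    have hp2 := hp.two_le
    obtain ⟨N, hN⟩ := h (p - 1) (by omega)
    set 𝒞 : Fin (p-1) → Set ℤ := fun u =>
      {z | z ∈ Set.Icc 1 (N : ℤ) ∧ (z.toNat / p ^ (z.toNat).factorization p) % p = u.val + 1}
      with h𝒞
    have hcolouring : IsColouring (p-1) 𝒞 (Set.Icc 1 (N : ℤ)) := by
      constructor
      · intro u z hz; exact hz.1
      · intro z hz
        have hz1 : 1 ≤ z := hz.1
        have hz0 : z.toNat ≠ 0 := by omega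
        set w : ℕ := z.toNat / p ^ (z.toNat).factorization p with hw
        have hnd : ¬ p ∣ w := Nat.not_dvd_ordCompl hp hz0
        have h1 : w % p ≠ 0 := fun hc => hnd (Nat.dvd_of_mod_eq_zero hc)
        have h2 : w % p < p := Nat.mod_lt _ (by omega)
        refine Set.mem_iUnion.mpr ⟨⟨w % p - 1, by omega⟩, hz, ?_⟩
        show (z.toNat / p ^ (z.toNat).factorization p) % p = (w % p - 1) + 1
        rw [← hw]
        omega
    obtain ⟨u, xx, hxx, hAx⟩ := hN 𝒞 hcolouring
    have hxmem : ∀ j, xx j ∈ Set.Icc 1 (N : ℤ) ∧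
        ((xx j).toNat / p ^ ((xx j).toNat).factorization p) % p = u.val + 1 := by
      intro j; exact hxx j
    refine ⟨fun j => (xx j).toNat, u.val + 1, ?_, ?_, by omega,
      by show u.val + 1 < p; have := u.isLt; omega, ?_⟩
    · intro j
      show (xx j).toNat ≠ 0
      have := (hxmem j).1.1
      omega
    · have : (fun j => (((xx j).toNat : ℕ) : ℤ)) = xx := by
        funext j
        have := (hxmem j).1.1
        omega
      rw [this]; exact hAx
    · intro j; exact (hxmem j).2
  choose X CC hX0 hAX hCC0 hCCp hXC using hdata
  -- Step 2: pigeonhole on rank functions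
  haveI : Infinite {p : ℕ // p.Prime} := Nat.infinite_setOf_prime.to_subtype
  set e : {p : ℕ // p.Prime} → Fin d → ℕ := fun P j => (X P j).factorization P.val with he
  have hrankbound : ∀ (P : {p : ℕ // p.Prime}) (j : Fin d),
      (Finset.univ.filter (fun i => e P i < e P j)).card < d := by
    intro P j
    have hsub : (Finset.univ.filter (fun i => e P i < e P j)) ⊆ Finset.univ.erase j := by
      intro i hi
      simp only [Finset.mem_filter, Finset.mem_univ, true_and] at hi
      refine Finset.mem_erase.mpr ⟨fun hc => ?_, Finset.mem_univ i⟩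
      subst hc; omega
    have := Finset.card_le_card hsub
    rw [Finset.card_erase_of_mem (Finset.mem_univ j)] at this
    simp only [Finset.card_univ, Fintype.card_fin] at this
    omega
  set ρfun : {p : ℕ // p.Prime} → (Fin d → Fin d) :=
    fun P j => ⟨(Finset.univ.filter (fun i => e P i < e P j)).card, hrankbound P j⟩ with hρfun
  obtain ⟨ρ, hρ⟩ := Finite.exists_infinite_fiber ρfun
  have hrk : ∀ P : {p : ℕ // p.Prime}, ρfun P = ρ →
      ∀ i i', e P i ≤ e P i' ↔ ρ i ≤ ρ i' := by
    intro P hP i i'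
    rw [rank_le_iff (e P)]
    have hval : ∀ i0, (ρ i0 : ℕ) = (Finset.univ.filter (fun i1 => e P i1 < e P i0)).card := by
      intro i0
      rw [← congrFun hP i0, hρfun]
    rw [← hval i, ← hval i']
    exact Fin.le_def.symm
  -- Step 3: the ordered partition
  set V : Finset (Fin d) := Finset.univ.image ρ with hV
  set t : ℕ := V.card with htdef
  have ht : 0 < t := Finset.card_pos.mpr ((Finset.univ_nonempty).image ρ)
  set σ : Fin t ≃o {i // i ∈ V} := V.orderIsoOfFin rfl with hσ
  set cI : Fin d → Fin t := fun i => σ.symm ⟨ρ i, Finset.mem_image_of_mem ρ (Finset.mem_univ i)⟩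
    with hcI
  have hcI_le : ∀ i i', cI i ≤ cI i' ↔ ρ i ≤ ρ i' := by
    intro i i'
    rw [hcI]
    simp only []
    rw [σ.symm.le_iff_le]
    exact Iff.rfl
  have hcI_eq : ∀ i i', cI i = cI i' ↔ ρ i = ρ i' := by
    intro i i'
    constructor
    · intro hh
      exact le_antisymm ((hcI_le i i').mp hh.le) ((hcI_le i' i).mp hh.ge)
    · intro hh
      exact le_antisymm ((hcI_le i i').mpr hh.le) ((hcI_le i' i).mpr hh.ge)
  set I : Fin t → Finset (Fin d) := fun j => Finset.univ.filter (fun i => cI i = j) with hI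
  have hInonempty : ∀ j : Fin t, ∃ i, i ∈ I j := by
    intro j
    obtain ⟨i, hi⟩ : ∃ i : Fin d, ρ i = ((σ j : {i // i ∈ V}) : Fin d) := by
      have h2 := (σ j).2
      simp only [hV, Finset.mem_image, Finset.mem_univ, true_and] at h2
      exact h2
    refine ⟨i, ?_⟩
    rw [hI]
    simp only [Finset.mem_filter, Finset.mem_univ, true_and, hcI]
    have : (⟨ρ i, Finset.mem_image_of_mem ρ (Finset.mem_univ i)⟩ : {x // x ∈ V}) = σ j :=
      Subtype.ext hi
    rw [this]
    exact σ.symm_apply_apply j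
  -- Step 4: key divisibility
  have key : ∀ (j : Fin t) (v : Fin k → ℤ),
      (∀ i : Fin d, cI i < j → (∑ xk, v xk * A xk i) = 0) →
      (∑ i ∈ I j, ∑ xk, v xk * A xk i) = 0 := by
    intro j v hv0
    set b : Fin d → ℤ := fun i => ∑ xk, v xk * A xk i with hb
    set Sv : ℤ := ∑ i ∈ I j, b i with hSvdef
    have hdvd : ∀ P : {p : ℕ // p.Prime}, ρfun P = ρ → (P.val : ℤ) ∣ Sv := by
      intro P hP
      have hp : Nat.Prime P.val := P.2
      haveI := Fact.mk hp
      have hrkP := hrk P hP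
      obtain ⟨i0, hi0⟩ := hInonempty j
      have hi0j : cI i0 = j := by
        rw [hI] at hi0
        simpa using hi0
      set mm : Fin d → ℕ := fun i => X P i / P.val ^ (X P i).factorization P.val with hmmdef
      have hfact : ∀ i : Fin d, X P i = P.val ^ (e P i) * mm i := by
        intro i
        rw [he, hmmdef]
        exact (Nat.ordProj_mul_ordCompl_eq_self (X P i) P.val).symm
      have hEle : ∀ i : Fin d, j ≤ cI i → e P i0 ≤ e P i := by
        intro i hle
        exact (hrkP i0 i).mpr ((hcI_le i0 i).mp (hi0j ▸ hle))
      have hEeq : ∀ i, cI i = j → e P i = e P i0 := by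
        intro i heqj
        refine le_antisymm ((hrkP i i0).mpr ((hcI_le i i0).mp ?_)) (hEle i heqj.ge)
        rw [heqj, hi0j]
      have hElt : ∀ i, j < cI i → e P i0 < e P i := by
        intro i hlt
        have h1 : e P i0 ≤ e P i := hEle i hlt.le
        have h2 : ¬ (e P i ≤ e P i0) := by
          intro hc
          have := (hcI_le i i0).mpr ((hrkP i i0).mp hc)
          rw [hi0j] at this
          exact absurd hlt (not_lt.mpr this)
        omega
      have hb0 : ∑ i : Fin d, b i * ((X P i : ℕ) : ℤ) = 0 := by
        have h1 : ∑ xk, v xk * (A.mulVec (fun i => ((X P i : ℕ) : ℤ))) xk = 0 := by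
          rw [hAX P]
          simp
        rw [← h1]
        simp only [Matrix.mulVec, dotProduct, Finset.mul_sum]
        rw [Finset.sum_comm]
        refine Finset.sum_congr rfl fun i _ => ?_
        simp only [hb]
        rw [Finset.sum_mul]
        exact Finset.sum_congr rfl fun xk _ => by ring
      have hzero1 : ∑ i ∈ Finset.univ.filter (fun i => cI i < j), b i * ((X P i : ℕ) : ℤ) = 0 :=
        Finset.sum_eq_zero fun i hi => by
          simp only [hb]
          rw [hv0 i (Finset.mem_filter.mp hi).2, zero_mul]
      have hsplit : ∑ i ∈ Finset.univ.filter (fun i => ¬ cI i < j), b i * ((X P i : ℕ) : ℤ) = 0 := by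
        have hadd := Finset.sum_filter_add_sum_filter_not Finset.univ (fun i => cI i < j)
          (fun i => b i * ((X P i : ℕ) : ℤ))
        rw [hb0, hzero1] at hadd
        linarith
      set T : ℤ := ∑ i ∈ Finset.univ.filter (fun i => ¬ cI i < j),
          b i * ((P.val : ℤ) ^ (e P i - e P i0) * (mm i : ℤ)) with hTdef
      have hfac : ∑ i ∈ Finset.univ.filter (fun i => ¬ cI i < j), b i * ((X P i : ℕ) : ℤ)
          = (P.val : ℤ) ^ (e P i0) * T := by
        rw [hTdef, Finset.mul_sum]
        refine Finset.sum_congr rfl fun i hi => ?_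
        have hle : e P i0 ≤ e P i := hEle i (not_lt.mp (Finset.mem_filter.mp hi).2)
        have hXi : ((X P i : ℕ) : ℤ) = (P.val : ℤ) ^ (e P i) * (mm i : ℤ) := by
          exact_mod_cast congrArg (fun n : ℕ => (n : ℤ)) (hfact i)
        rw [show e P i = e P i0 + (e P i - e P i0) by omega, pow_add] at hXi
        rw [hXi]
        ring
      have hTzero : T = 0 := by
        have hppow : ((P.val : ℤ)) ^ (e P i0) ≠ 0 :=
          pow_ne_zero _ (by exact_mod_cast hp.pos.ne')
        rcases mul_eq_zero.mp (hfac ▸ hsplit) with hcase | hcase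
        · exact absurd hcase hppow
        · exact hcase
      have hZ : ((T : ℤ) : ZMod P.val) = 0 := by rw [hTzero]; exact Int.cast_zero
      rw [hTdef] at hZ
      push_cast at hZ
      have hsplit2 := Finset.sum_filter_add_sum_filter_not
        (Finset.univ.filter (fun i => ¬ cI i < j)) (fun i => cI i = j)
        (fun i => (b i : ZMod P.val) * ((P.val : ZMod P.val) ^ (e P i - e P i0) * (mm i : ZMod P.val)))
      have hIj : (Finset.univ.filter (fun i => ¬ cI i < j)).filter (fun i => cI i = j) = I j := by
        rw [hI]
        ext i
        simp only [Finset.mem_filter, Finset.mem_univ, true_and]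
        constructor
        · rintro ⟨_, h2⟩; exact h2
        · intro h2
          exact ⟨by rw [h2]; exact lt_irrefl j, h2⟩
      have hrest : ∑ i ∈ (Finset.univ.filter (fun i => ¬ cI i < j)).filter (fun i => ¬ cI i = j),
          (b i : ZMod P.val) * ((P.val : ZMod P.val) ^ (e P i - e P i0) * (mm i : ZMod P.val)) = 0 := by
        refine Finset.sum_eq_zero fun i hi => ?_
        simp only [Finset.mem_filter, Finset.mem_univ, true_and] at hi
        have hlt : j < cI i := lt_of_le_of_ne (not_lt.mp hi.1) (fun hc => hi.2 hc.symm)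
        have hd1 : e P i0 < e P i := hElt i hlt
        rw [ZMod.natCast_self, zero_pow (by omega : e P i - e P i0 ≠ 0), zero_mul, mul_zero]
      have hmmcast : ∀ i : Fin d, (mm i : ZMod P.val) = (CC P : ZMod P.val) := by
        intro i
        apply (ZMod.natCast_eq_natCast_iff _ _ _).mpr
        show mm i % P.val = CC P % P.val
        rw [Nat.mod_eq_of_lt (hCCp P), hmmdef]
        exact hXC P i
      have hmain : ∑ i ∈ I j, (b i : ZMod P.val)
          * ((P.val : ZMod P.val) ^ (e P i - e P i0) * (mm i : ZMod P.val)) = 0 := by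
        rw [hIj, hrest, add_zero, hZ] at hsplit2
        exact hsplit2
      have h2 : (∑ i ∈ I j, (b i : ZMod P.val)) * (CC P : ZMod P.val) = 0 := by
        rw [Finset.sum_mul, ← hmain]
        refine Finset.sum_congr rfl fun i hi => ?_
        have hij : cI i = j := by
          rw [hI] at hi
          simpa using hi
        rw [hEeq i hij, Nat.sub_self, pow_zero, one_mul, hmmcast i]
      have hccne : (CC P : ZMod P.val) ≠ 0 := by
        intro hc
        have h3 := (ZMod.natCast_eq_zero_iff _ _).mp hc
        have h4 := Nat.le_of_dvd (hCC0 P) h3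
        have h5 := hCCp P
        omega
      have hSvz : ((Sv : ℤ) : ZMod P.val) = 0 := by
        have h6 : (∑ i ∈ I j, (b i : ZMod P.val)) = 0 := by
          rcases mul_eq_zero.mp h2 with hx | hx
          · exact hx
          · exact absurd hx hccne
        rw [hSvdef]
        push_cast
        exact h6
      exact (ZMod.intCast_zmod_eq_zero_iff_dvd _ _).mp hSvz
    -- conclude Sv = 0 from infinitude of primes
    by_contra hne
    have hPinf : (Subtype.val '' (ρfun ⁻¹' {ρ})).Infinite :=
      (Set.infinite_coe_iff.mp hρ).image (Subtype.val_injective.injOn)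
    obtain ⟨pp, hppmem, hpplt⟩ := hPinf.exists_gt Sv.natAbs
    obtain ⟨P, hPmem, rfl⟩ := hppmem
    have hdl := hdvd P hPmem
    have habs : (P.val : ℤ) ≤ |Sv| := Int.le_of_dvd (abs_pos.mpr hne) ((dvd_abs _ _).mpr hdl)
    rw [Int.abs_eq_natAbs] at habs
    have hfin : (P.val : ℕ) ≤ Sv.natAbs := by exact_mod_cast habs
    omega
  -- Step 5: span membership and extraction of coefficients
  set col : Fin d → (Fin k → ℚ) := fun i => (fun xk => (A xk i : ℚ)) with hcoldef
  set Ufun : Fin t → Finset (Fin d) := fun j => Finset.univ.filter (fun i => cI i < j)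
    with hUfun
  have colmem : ∀ j : Fin t, (∑ i ∈ I j, col i) ∈ Submodule.span ℚ
      (Set.range (fun i : {i' // i' ∈ Ufun j} => col i.val)) := by
    intro j
    by_contra hnot
    set W := Submodule.span ℚ (Set.range (fun i : {i' // i' ∈ Ufun j} => col i.val)) with hW
    have hπ : Submodule.Quotient.mk (p := W) (∑ i ∈ I j, col i) ≠ 0 := by
      intro hcc
      exact hnot ((Submodule.Quotient.mk_eq_zero W).mp hcc)
    obtain ⟨φ, hφ⟩ : ∃ φ : Module.Dual ℚ ((Fin k → ℚ) ⧸ W),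
        φ (Submodule.Quotient.mk (∑ i ∈ I j, col i)) ≠ 0 := by
      by_contra hc
      push_neg at hc
      exact hπ ((Module.forall_dual_apply_eq_zero_iff ℚ _).mp hc)
    set f : (Fin k → ℚ) →ₗ[ℚ] ℚ := φ.comp W.mkQ with hf
    have hfU : ∀ i : Fin d, i ∈ Ufun j → f (col i) = 0 := by
      intro i hi
      have hmem : col i ∈ W := by
        rw [hW]
        exact Submodule.subset_span ⟨⟨i, hi⟩, rfl⟩
      rw [hf]
      simp only [LinearMap.comp_apply, Submodule.mkQ_apply]
      rw [(Submodule.Quotient.mk_eq_zero W).mpr hmem]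
      exact map_zero φ
    have hfS : f (∑ i ∈ I j, col i) ≠ 0 := by
      rw [hf]
      simp only [LinearMap.comp_apply, Submodule.mkQ_apply]
      exact hφ
    set w : Fin k → ℚ := fun xk => f (fun j' => if xk = j' then 1 else 0) with hw
    have hfw : ∀ y : Fin k → ℚ, f y = ∑ xk, y xk * w xk := by
      intro y
      rw [LinearMap.pi_apply_eq_sum_univ f y]
      exact Finset.sum_congr rfl fun xk _ => by rw [smul_eq_mul, hw]
    set D : ℕ := ∏ xk, (w xk).den with hD
    have hDpos : 0 < D := Finset.prod_pos fun xk _ => (w xk).pos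
    have hdvdD : ∀ xk, (w xk).den ∣ D := fun xk => Finset.dvd_prod_of_mem _ (Finset.mem_univ xk)
    set v : Fin k → ℤ := fun xk => ((D / (w xk).den : ℕ) : ℤ) * (w xk).num with hv
    have hvq : ∀ xk, ((v xk : ℤ) : ℚ) = (D : ℚ) * w xk := fun xk => den_dvd_cast (hdvdD xk)
    have hbv : ∀ i : Fin d, ((∑ xk, v xk * A xk i : ℤ) : ℚ) = (D : ℚ) * f (col i) := by
      intro i
      push_cast
      rw [hfw (col i), Finset.mul_sum]
      refine Finset.sum_congr rfl fun xk _ => ?_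
      rw [hvq xk]
      simp only [hcoldef]
      ring
    have hzero : ∀ i : Fin d, cI i < j → (∑ xk, v xk * A xk i) = 0 := by
      intro i hij
      have h1 : ((∑ xk, v xk * A xk i : ℤ) : ℚ) = 0 := by
        rw [hbv i, hfU i, mul_zero]
        simp only [hUfun, Finset.mem_filter, Finset.mem_univ, true_and]
        exact hij
      exact_mod_cast h1
    have hkey := key j v hzero
    have hsum : (0 : ℚ) = (D : ℚ) * f (∑ i ∈ I j, col i) := by
      calc (0 : ℚ) = ((∑ i ∈ I j, ∑ xk, v xk * A xk i : ℤ) : ℚ) := by rw [hkey]; simp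
        _ = ∑ i ∈ I j, ((∑ xk, v xk * A xk i : ℤ) : ℚ) := by push_cast; ring
        _ = ∑ i ∈ I j, (D : ℚ) * f (col i) := Finset.sum_congr rfl fun i _ => hbv i
        _ = (D : ℚ) * f (∑ i ∈ I j, col i) := by rw [map_sum, Finset.mul_sum]
    have hfz : f (∑ i ∈ I j, col i) = 0 := by
      have hDne : (D : ℚ) ≠ 0 := by positivity
      rcases mul_eq_zero.mp hsum.symm with hx | hx
      · exact absurd hx hDne
      · exact hx
    exact hfS hfz
  have hrep : ∀ j : Fin t, ∃ coef : {i' // i' ∈ Ufun j} → ℚ,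
      ∑ i : {i' // i' ∈ Ufun j}, coef i • col i.val = ∑ i ∈ I j, col i := by
    intro j
    exact (Submodule.mem_span_range_iff_exists_fun ℚ).mp (colmem j)
  choose coef hcoef using hrep
  refine ⟨t, ht, I, fun i j => if h : i ∈ Ufun j then coef j ⟨i, h⟩ else 0, ?_, ?_, ?_⟩
  · intro i
    refine ⟨cI i, ?_, ?_⟩
    · rw [hI]
      simp
    · intro y hy
      rw [hI] at hy
      simp only [Finset.mem_filter, Finset.mem_univ, true_and] at hy
      exact hy.symm
  · intro i j hne
    by_cases hmem : i ∈ Ufun j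
    · refine ⟨cI i, ?_, ?_⟩
      · have := hmem
        simp only [hUfun, Finset.mem_filter, Finset.mem_univ, true_and] at this
        exact this
      · rw [hI]
        simp
    · simp only [dif_neg hmem] at hne
      exact absurd rfl hne
  · intro j
    show (∑ i ∈ I j, col i) = ∑ i : Fin d, (if h : i ∈ Ufun j then coef j ⟨i, h⟩ else 0) • col i
    have h1 : ∑ i : {i' // i' ∈ Ufun j}, coef j i • col i.val
        = ∑ i ∈ Ufun j, (if h : i ∈ Ufun j then coef j ⟨i, h⟩ else 0) • col i := by
      rw [← Finset.sum_attach (Ufun j)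
        (fun i' => (if h : i' ∈ Ufun j then coef j ⟨i', h⟩ else 0) • col i'),
        Finset.univ_eq_attach]
      refine Finset.sum_congr rfl fun i _ => ?_
      rw [dif_pos i.2]
    have h2 : ∑ i : Fin d, (if h : i ∈ Ufun j then coef j ⟨i, h⟩ else 0) • col i
        = ∑ i ∈ Ufun j, (if h : i ∈ Ufun j then coef j ⟨i, h⟩ else 0) • col i := by
      rw [← Finset.sum_filter_add_sum_filter_not Finset.univ (fun i => i ∈ Ufun j)
        (fun i => (if h : i ∈ Ufun j then coef j ⟨i, h⟩ else 0) • col i)]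
      have hfil : Finset.univ.filter (fun i => i ∈ Ufun j) = Ufun j := by
        ext i
        simp
      have hz : ∑ i ∈ Finset.univ.filter (fun i => ¬ i ∈ Ufun j),
          (if h : i ∈ Ufun j then coef j ⟨i, h⟩ else 0) • col i = 0 :=
        Finset.sum_eq_zero fun i hi => by
          rw [dif_neg (Finset.mem_filter.mp hi).2]
          exact zero_smul _ _
      rw [hfil, hz, add_zero]
    rw [h2, ← h1, hcoef j]

/-- Rado's theorem. -/
theorem stmt3 {k d : ℕ} (A : Matrix (Fin k) (Fin d) ℤ) :
    IsPartitionRegular A ↔ ColumnsCondition A := by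
  exact ⟨pr_imp_cc A, cc_imp_pr A⟩
end

section
/- (Invariance) Let P = x + d·{−N,…,N} be an arithmetic progression of odd length in ℤ (x ∈ ℤ, d ∈ ℕ, N ∈ ℕ₀), let δ ∈ (0,1], and let f : ℤ → ℂ be a bounded function. Then for every y ∈ I_δ(P) we have |E_{x∈P} f(x+y) − E_{x∈P} f(x)| ≤ 2δ·‖f‖_∞, where ‖f‖_∞ := sup_{z∈ℤ} |f(z)|. -/
/-- The arithmetic progression of odd length `x + d·{−N,…,N}` with centre `x`,
common difference `d` and radius `N`. -/
noncomputable def progFinset (x : ℤ) (d : ℕ) (N : ℕ) : Finset ℤ :=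
  (Finset.Icc (-(N : ℤ)) N).image fun n => x + d * n

/-- `I_δ(P) = d·{−⌊δN⌋,…,⌊δN⌋}` for a progression of common difference `d` and radius `N`. -/
noncomputable def Ifrac (δ : ℝ) (d : ℕ) (N : ℕ) : Finset ℤ :=
  progFinset 0 d (Nat.floor (δ * N))

lemma card_sdiff_Icc (N : ℕ) (m : ℤ) :
    ((Finset.Icc (-(N:ℤ) + m) (N + m)) \ Finset.Icc (-(N:ℤ)) N).card ≤ m.natAbs := by
  rcases le_or_gt 0 m with h | h
  · have hsub : (Finset.Icc (-(N:ℤ) + m) (N + m)) \ Finset.Icc (-(N:ℤ)) N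
        ⊆ Finset.Icc ((N:ℤ) + 1) (N + m) := by
      intro n hn
      simp only [Finset.mem_sdiff, Finset.mem_Icc, not_and, not_le] at hn ⊢
      omega
    calc _ ≤ (Finset.Icc ((N:ℤ) + 1) (N + m)).card := Finset.card_le_card hsub
      _ = m.natAbs := by rw [Int.card_Icc]; omega
  · have hsub : (Finset.Icc (-(N:ℤ) + m) (N + m)) \ Finset.Icc (-(N:ℤ)) N
        ⊆ Finset.Icc (-(N:ℤ) + m) (-(N:ℤ) - 1) := by
      intro n hn
      simp only [Finset.mem_sdiff, Finset.mem_Icc, not_and, not_le] at hn ⊢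
      omega
    calc _ ≤ (Finset.Icc (-(N:ℤ) + m) (-(N:ℤ) - 1)).card := Finset.card_le_card hsub
      _ = m.natAbs := by rw [Int.card_Icc]; omega

lemma card_sdiff_Icc' (N : ℕ) (m : ℤ) :
    ((Finset.Icc (-(N:ℤ)) N) \ Finset.Icc (-(N:ℤ) + m) (N + m)).card ≤ m.natAbs := by
  rcases le_or_gt 0 m with h | h
  · have hsub : (Finset.Icc (-(N:ℤ)) N) \ Finset.Icc (-(N:ℤ) + m) (N + m)
        ⊆ Finset.Icc (-(N:ℤ)) (-(N:ℤ) + m - 1) := by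
      intro n hn
      simp only [Finset.mem_sdiff, Finset.mem_Icc, not_and, not_le] at hn ⊢
      omega
    calc _ ≤ (Finset.Icc (-(N:ℤ)) (-(N:ℤ) + m - 1)).card := Finset.card_le_card hsub
      _ = m.natAbs := by rw [Int.card_Icc]; omega
  · have hsub : (Finset.Icc (-(N:ℤ)) N) \ Finset.Icc (-(N:ℤ) + m) (N + m)
        ⊆ Finset.Icc ((N:ℤ) + m + 1) N := by
      intro n hn
      simp only [Finset.mem_sdiff, Finset.mem_Icc, not_and, not_le] at hn ⊢
      omega
    calc _ ≤ (Finset.Icc ((N:ℤ) + m + 1) N).card := Finset.card_le_card hsub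
      _ = m.natAbs := by rw [Int.card_Icc]; omega

/-- Invariance: for every bound `M` on `‖f‖_∞` and every `y ∈ I_δ(P)`,
`|E_{x∈P} f(x+y) − E_{x∈P} f(x)| ≤ 2δM`. -/
theorem stmt10 (x : ℤ) (d : ℕ) (hd : 0 < d) (N : ℕ) (δ : ℝ) (hδ0 : 0 < δ) (hδ1 : δ ≤ 1)
    (f : ℤ → ℂ) (M : ℝ) (hf : ∀ z : ℤ, ‖f z‖ ≤ M)
    (y : ℤ) (hy : y ∈ Ifrac δ d N) :
    ‖((progFinset x d N).card : ℂ)⁻¹ * (∑ z ∈ progFinset x d N, f (z + y)) -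
        ((progFinset x d N).card : ℂ)⁻¹ * (∑ z ∈ progFinset x d N, f z)‖ ≤ 2 * δ * M := by
  have hM : 0 ≤ M := le_trans (norm_nonneg (f 0)) (hf 0)
  obtain ⟨m, hmmem, rfl⟩ := Finset.mem_image.1 hy
  rw [Finset.mem_Icc] at hmmem
  have hmabs : (m.natAbs : ℝ) ≤ δ * N := by
    have h1 : m.natAbs ≤ Nat.floor (δ * N) := by omega
    calc (m.natAbs : ℝ) ≤ (Nat.floor (δ * N) : ℝ) := by exact_mod_cast h1
      _ ≤ δ * N := Nat.floor_le (by positivity)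
  have hinj : Set.InjOn (fun n : ℤ => x + d * n) (Finset.Icc (-(N:ℤ)) N) := by
    intro a _ b _ hab
    simp only at hab
    have hd' : (d:ℤ) ≠ 0 := by exact_mod_cast hd.ne'
    exact mul_left_cancel₀ hd' (by linarith [hab] : (d:ℤ) * a = d * b)
  have hcard : (progFinset x d N).card = 2 * N + 1 := by
    rw [progFinset, Finset.card_image_of_injOn hinj, Int.card_Icc]
    omega
  set g : ℤ → ℂ := fun n => f (x + d * n) with hg
  have hs1 : (∑ z ∈ progFinset x d N, f (z + (0 + d * m)))
      = ∑ n ∈ Finset.Icc (-(N:ℤ) + m) (N + m), g n := by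
    rw [progFinset, Finset.sum_image hinj]
    rw [← Finset.image_add_right_Icc, Finset.sum_image (fun a _ b _ h => by omega)]
    congr 1; ext n; rw [hg]; ring_nf
  have hs2 : (∑ z ∈ progFinset x d N, f z) = ∑ n ∈ Finset.Icc (-(N:ℤ)) N, g n :=
    Finset.sum_image hinj
  rw [hs1, hs2, ← mul_sub, ← Finset.sum_sdiff_sub_sum_sdiff]
  set A := Finset.Icc (-(N:ℤ) + m) (N + m) with hA
  set B := Finset.Icc (-(N:ℤ)) N with hB
  have key : ∀ s : Finset ℤ, ‖∑ n ∈ s, g n‖ ≤ s.card * M := by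
    intro s
    calc ‖∑ n ∈ s, g n‖ ≤ ∑ n ∈ s, M := norm_sum_le_of_le s (fun n _ => hf (x + d * n))
      _ = s.card * M := by rw [Finset.sum_const, nsmul_eq_mul]
  have hnorm : ‖(∑ n ∈ A \ B, g n) - ∑ n ∈ B \ A, g n‖ ≤ 2 * (m.natAbs : ℝ) * M := by
    calc ‖(∑ n ∈ A \ B, g n) - ∑ n ∈ B \ A, g n‖
        ≤ ‖∑ n ∈ A \ B, g n‖ + ‖∑ n ∈ B \ A, g n‖ := norm_sub_le _ _
      _ ≤ (A \ B).card * M + (B \ A).card * M := by gcongr <;> exact key _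
      _ ≤ (m.natAbs : ℝ) * M + (m.natAbs : ℝ) * M := by
          gcongr
          · exact_mod_cast card_sdiff_Icc N m
          · exact_mod_cast card_sdiff_Icc' N m
      _ = 2 * (m.natAbs : ℝ) * M := by ring
  rw [norm_mul, hcard]
  have hinvnorm : ‖((2 * N + 1 : ℕ) : ℂ)⁻¹‖ = ((2 * N + 1 : ℕ) : ℝ)⁻¹ := by
    rw [norm_inv, Complex.norm_natCast]
  rw [hinvnorm, inv_mul_le_iff₀ (by positivity)]
  calc ‖(∑ n ∈ A \ B, g n) - ∑ n ∈ B \ A, g n‖ ≤ 2 * (m.natAbs : ℝ) * M := hnorm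
    _ ≤ 2 * (δ * N) * M := by gcongr
    _ ≤ ((2 * N + 1 : ℕ) : ℝ) * (2 * δ * M) := by push_cast; nlinarith [Nat.cast_nonneg (α := ℝ) N]
end
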